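/- For every partition λ ⊢ n−1, the map ψ : SYT(λ^□) → SYT(λ^□) given by ψ(P) := jdt(1 + jdt^{−1}(P)) is a well-defined bijection whose n-th iterate is the identity (so ψ generates a ℤ_n-action on SYT(λ^□)), and it rotates cyclic descent sets: cDes(ψ(P)) = 1 + cDes(P) (addition modulo n, elementwise) for every P ∈ SYT(λ^□). -/

import Mathlib

open scoped Classical

noncomputable section

namespace SchurRot

/-! ### Permutations -/

/-- The value of the permutation `π ∈ S_n` (in one-line notation, with positions and
values `1,…,n`) at position `i ∈ [1,n]`. -/
def permVal {n : ℕ} (π : Equiv.Perm (Fin n)) (i : ℕ) : ℕ :=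
  if h : i - 1 < n then ((π ⟨i - 1, h⟩ : Fin n) : ℕ) + 1 else 0

/-- The descent set `Des(π) = {i ∈ [n-1] : π(i) > π(i+1)}`. -/
def DesPerm {n : ℕ} (π : Equiv.Perm (Fin n)) : Finset ℕ :=
  (Finset.Icc 1 (n - 1)).filter fun i => permVal π (i + 1) < permVal π i

/-- The cyclic descent set of `π ∈ S_n`: `Des(π)`, with `n` added iff `π(n) > π(1)`. -/
def cDesPerm {n : ℕ} (π : Equiv.Perm (Fin n)) : Finset ℕ :=
  if permVal π 1 < permVal π n then insert n (DesPerm π) else DesPerm π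

/-- `π ∈ S_n` fixes the letter `n` (so it can be viewed as an element of `S_{n-1}`). -/
def FixesTop {n : ℕ} (π : Equiv.Perm (Fin n)) : Prop :=
  ∀ i : Fin n, (i : ℕ) = n - 1 → π i = i

/-! ### Quasisymmetric and symmetric functions, in variables `x_1, x_2, …`
indexed by positive natural numbers (the variable `x_0` is unused). -/

/-- The fundamental quasisymmetric function `F_{n,D}`, as a formal power series in the
variables `x_i, i ∈ ℕ` (only variables with positive index are used): the coefficient of
a monomial `m` is the number of weakly increasing sequences `1 ≤ i_1 ≤ … ≤ i_n`, strictly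
increasing at positions in `D`, with content monomial `m`. -/
def Fqs (n : ℕ) (D : Finset ℕ) : MvPowerSeries ℕ ℤ :=
  fun m => (Set.ncard {g : Fin n → ℕ |
    (∀ p, 1 ≤ g p) ∧ Monotone g ∧
    (∀ j ∈ D, ∀ (h1 : j - 1 < n) (h2 : j < n), g ⟨j - 1, h1⟩ < g ⟨j, h2⟩) ∧
    (∑ p, Finsupp.single (g p) (1 : ℕ)) = m} : ℤ)

/-- `Q(B) = Σ_{π ∈ B} F_{m, Des(π)}` for a finite set `B` of permutations. -/
def Qset (m : ℕ) {n : ℕ} (B : Finset (Equiv.Perm (Fin n))) : MvPowerSeries ℕ ℤ :=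
  ∑ π ∈ B, Fqs m (DesPerm π)

/-- `Q(B)` for a multiset `B` of permutations, counted with multiplicity. -/
def Qmult (m : ℕ) {n : ℕ} (B : Multiset (Equiv.Perm (Fin n))) : MvPowerSeries ℕ ℤ :=
  (B.map fun π => Fqs m (DesPerm π)).sum

/-- The set `A·C_n = {π c^k : π ∈ A, 0 ≤ k < n}`, where `c = finRotate n` is the
`n`-cycle `(1,2,…,n)`. -/
def ACn {n : ℕ} (A : Finset (Equiv.Perm (Fin n))) : Finset (Equiv.Perm (Fin n)) :=
  (A ×ˢ Finset.range n).image fun p => p.1 * (finRotate n) ^ p.2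

/-- The multiset `A·C_n`, counted with multiplicities. -/
def ACmult {n : ℕ} (A : Multiset (Equiv.Perm (Fin n))) : Multiset (Equiv.Perm (Fin n)) :=
  A.bind fun π => (Multiset.range n).map fun k => π * (finRotate n) ^ k

/-- A formal power series in the variables `x_i, i ∈ ℕ` is a symmetric function if its
coefficients are invariant under every permutation of the variables. -/
def IsSymmFn (f : MvPowerSeries ℕ ℤ) : Prop :=
  ∀ (σ : Equiv.Perm ℕ) (m : ℕ →₀ ℕ),
    MvPowerSeries.coeff (R := ℤ) (Finsupp.equivMapDomain σ m) f = MvPowerSeries.coeff (R := ℤ) m f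

/-! ### Tableaux: fillings of an arbitrary finite cell set (in English notation,
cell `(i,j)` is in row `i` (increasing downwards) and column `j`). -/

/-- A semistandard filling of `cells` (entries ≥ 1, weakly increasing along rows,
strictly increasing down columns, `0` outside `cells`). -/
def IsSSYT (cells : Finset (ℕ × ℕ)) (g : ℕ × ℕ → ℕ) : Prop :=
  (∀ c, c ∉ cells → g c = 0) ∧ (∀ c ∈ cells, 1 ≤ g c) ∧
  (∀ a ∈ cells, ∀ b ∈ cells, a.1 = b.1 → a.2 ≤ b.2 → g a ≤ g b) ∧
  (∀ a ∈ cells, ∀ b ∈ cells, a.2 = b.2 → a.1 < b.1 → g a < g b)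

/-- The content monomial of a filling. -/
def contentOf (cells : Finset (ℕ × ℕ)) (g : ℕ × ℕ → ℕ) : ℕ →₀ ℕ :=
  ∑ c ∈ cells, Finsupp.single (g c) 1

/-- The (skew) Schur function of an arbitrary finite cell set: the sum, over all
semistandard fillings, of their content monomials. -/
def schurOf (cells : Finset (ℕ × ℕ)) : MvPowerSeries ℕ ℤ :=
  fun m => (Set.ncard {g : ℕ × ℕ → ℕ | IsSSYT cells g ∧ contentOf cells g = m} : ℤ)

/-- `f` is Schur-positive of degree `m`: a nonnegative integer combination of Schur
functions of partitions of `m` (encoded by a multiset of Young diagrams). -/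
def SchurPositive (m : ℕ) (f : MvPowerSeries ℕ ℤ) : Prop :=
  ∃ M : Multiset YoungDiagram, (∀ μ ∈ M, μ.cells.card = m) ∧
    f = (M.map fun μ => schurOf μ.cells).sum

/-! ### Standard fillings, rotation, reading words -/

/-- A filling of `cells` by the letters `1,…,n`, each used exactly once (and `0`
outside `cells`). -/
def IsFillingF (n : ℕ) (cells : Finset (ℕ × ℕ)) (f : ℕ × ℕ → ℕ) : Prop :=
  Set.BijOn f ↑cells (Set.Icc 1 n) ∧ ∀ c, c ∉ cells → f c = 0

/-- A filling is standard if its rows and columns increase. -/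
def IsStandardF (cells : Finset (ℕ × ℕ)) (f : ℕ × ℕ → ℕ) : Prop :=
  (∀ a ∈ cells, ∀ b ∈ cells, a.1 = b.1 → a.2 < b.2 → f a < f b) ∧
  (∀ a ∈ cells, ∀ b ∈ cells, a.2 = b.2 → a.1 < b.1 → f a < f b)

/-- Addition of `k` modulo `n` on the letters `1,…,n` (with `0` identified with `n`). -/
def rotval (n k e : ℕ) : ℕ := (e + k - 1) % n + 1

/-- Addition of an integer `k` modulo `n` on the letters `1,…,n`. -/
def rotvalZ (n : ℕ) (k : ℤ) (e : ℕ) : ℕ := (((e : ℤ) + k - 1) % (n : ℤ)).toNat + 1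

/-- Apply `φ` to every entry of a filling (keeping `0` outside `cells`);
e.g. `mapEntries cells (rotval n k) T` is the rotated tableau `k + T`. -/
def mapEntries (cells : Finset (ℕ × ℕ)) (φ : ℕ → ℕ) (f : ℕ × ℕ → ℕ) : ℕ × ℕ → ℕ :=
  fun c => if c ∈ cells then φ (f c) else 0

/-- The row containing the entry `e`. -/
def rowOf (cells : Finset (ℕ × ℕ)) (f : ℕ × ℕ → ℕ) (e : ℕ) : ℕ :=
  sInf {i | ∃ j, (i, j) ∈ cells ∧ f (i, j) = e}

/-- The cell containing the entry `e`. -/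
def cellOf (cells : Finset (ℕ × ℕ)) (f : ℕ × ℕ → ℕ) (e : ℕ) : ℕ × ℕ :=
  (rowOf cells f e,
    sInf {j | (rowOf cells f e, j) ∈ cells ∧ f (rowOf cells f e, j) = e})

/-- The cyclic descent set of a (rotated) filling of size `n`:
`{i ∈ [n] : i+1 (mod n) lies in a strictly lower row than i}`. -/
def cDesRot (n : ℕ) (cells : Finset (ℕ × ℕ)) (f : ℕ × ℕ → ℕ) : Finset ℕ :=
  (Finset.Icc 1 n).filter fun i => rowOf cells f i < rowOf cells f (rotval n 1 i)

/-- The descent set of a filling of size `n`: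
`{i ∈ [n-1] : i+1 lies in a strictly lower row than i}`. -/
def DesTab (n : ℕ) (cells : Finset (ℕ × ℕ)) (f : ℕ × ℕ → ℕ) : Finset ℕ :=
  (Finset.Icc 1 (n - 1)).filter fun i => rowOf cells f i < rowOf cells f (i + 1)

/-- `a` comes before `b` in reading order (rows left to right, bottom row first). -/
def readBefore (a b : ℕ × ℕ) : Prop :=
  b.1 < a.1 ∨ (a.1 = b.1 ∧ a.2 < b.2)

/-- The (1-indexed) position of the cell `c` in the reading order of `cells`. -/
def posInRead (cells : Finset (ℕ × ℕ)) (c : ℕ × ℕ) : ℕ :=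
  (cells.filter fun c' => readBefore c' c).card + 1

/-- The value at `e` of the inverse of the reading word of the filling `f`, i.e. the
position of the entry `e` in the reading word. -/
def invReadVal (cells : Finset (ℕ × ℕ)) (f : ℕ × ℕ → ℕ) (e : ℕ) : ℕ :=
  posInRead cells (cellOf cells f e)

/-- `A_λ` (for `cells` the diagram of `λ ⊢ m`): the set of permutations in `S_m` that are
inverse reading words of standard Young tableaux of shape `λ`. -/
def invWordSet (m : ℕ) (cells : Finset (ℕ × ℕ)) : Finset (Equiv.Perm (Fin m)) :=
  Finset.univ.filter fun π => ∃ f : ℕ × ℕ → ℕ,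
    IsFillingF m cells f ∧ IsStandardF cells f ∧
    ∀ e ∈ Finset.Icc 1 m, permVal π e = invReadVal cells f e

/-! ### The jeu-de-taquin type straightening algorithms -/

/-- The entry `i` is short: some entry immediately above it or immediately to its left
is larger. -/
def IsShort (cells : Finset (ℕ × ℕ)) (f : ℕ × ℕ → ℕ) (i : ℕ) : Prop :=
  ∃ c ∈ cells, f c = i ∧
    ((1 ≤ c.1 ∧ (c.1 - 1, c.2) ∈ cells ∧ i < f (c.1 - 1, c.2)) ∨
     (1 ≤ c.2 ∧ (c.1, c.2 - 1) ∈ cells ∧ i < f (c.1, c.2 - 1)))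

/-- The entry `i` is tall: some entry immediately below it or immediately to its right
is smaller. -/
def IsTall (cells : Finset (ℕ × ℕ)) (f : ℕ × ℕ → ℕ) (i : ℕ) : Prop :=
  ∃ c ∈ cells, f c = i ∧
    (((c.1 + 1, c.2) ∈ cells ∧ f (c.1 + 1, c.2) < i) ∨
     ((c.1, c.2 + 1) ∈ cells ∧ f (c.1, c.2 + 1) < i))

def shorts (n : ℕ) (cells : Finset (ℕ × ℕ)) (f : ℕ × ℕ → ℕ) : Finset ℕ :=
  (Finset.Icc 1 n).filter fun i => IsShort cells f i

def talls (n : ℕ) (cells : Finset (ℕ × ℕ)) (f : ℕ × ℕ → ℕ) : Finset ℕ :=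
  (Finset.Icc 1 n).filter fun i => IsTall cells f i

/-- One elementary step of `jdt`: take the minimal short entry `i` and switch it with
the larger of the entries immediately above it and immediately to its left. -/
def stepFun (n : ℕ) (cells : Finset (ℕ × ℕ)) (f : ℕ × ℕ → ℕ) : ℕ × ℕ → ℕ :=
  if h : (shorts n cells f).Nonempty then
    let i := (shorts n cells f).min' h
    let c := cellOf cells f i
    let av := if 1 ≤ c.1 ∧ (c.1 - 1, c.2) ∈ cells then f (c.1 - 1, c.2) else 0
    let lv := if 1 ≤ c.2 ∧ (c.1, c.2 - 1) ∈ cells then f (c.1, c.2 - 1) else 0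
    mapEntries cells (Equiv.swap i (max av lv)) f
  else f

/-- One elementary step of `ijdt`: take the maximal tall entry `i` and switch it with
the smaller of the entries immediately below it and immediately to its right. -/
def istepFun (n : ℕ) (cells : Finset (ℕ × ℕ)) (f : ℕ × ℕ → ℕ) : ℕ × ℕ → ℕ :=
  if h : (talls n cells f).Nonempty then
    let i := (talls n cells f).max' h
    let c := cellOf cells f i
    let bv := if (c.1 + 1, c.2) ∈ cells then f (c.1 + 1, c.2) else n + 1
    let rv := if (c.1, c.2 + 1) ∈ cells then f (c.1, c.2 + 1) else n + 1
    mapEntries cells (Equiv.swap i (min bv rv)) f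
  else f

/-- The straightening `jdt`: repeat the elementary step until the filling is standard. -/
def jdtFun (n : ℕ) (cells : Finset (ℕ × ℕ)) (f : ℕ × ℕ → ℕ) : ℕ × ℕ → ℕ :=
  if h : ∃ m, IsStandardF cells ((stepFun n cells)^[m] f) then
    (stepFun n cells)^[Nat.find h] f
  else f

/-- The straightening `ijdt`: repeat the reverse elementary step until the filling is
standard. -/
def ijdtFun (n : ℕ) (cells : Finset (ℕ × ℕ)) (f : ℕ × ℕ → ℕ) : ℕ × ℕ → ℕ :=
  if h : ∃ m, IsStandardF cells ((istepFun n cells)^[m] f) then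
    (istepFun n cells)^[Nat.find h] f
  else f

/-! ### The shape `λ^□` -/

/-- The cell of the disconnected box of `λ^□`, strictly north and strictly east of `λ`. -/
def boxCell (lam : YoungDiagram) : ℕ × ℕ := (0, lam.rowLen 0)

/-- The skew shape `λ^□`: `λ` (shifted one row down) together with one disconnected box
at its upper right corner. -/
def boxShape (lam : YoungDiagram) : Finset (ℕ × ℕ) :=
  insert (boxCell lam) (lam.cells.image fun c => (c.1 + 1, c.2))

/-- `δ(P)`: the entry of the disconnected box of a filling of `λ^□`. -/
def deltaOf (lam : YoungDiagram) (f : ℕ × ℕ → ℕ) : ℕ := f (boxCell lam)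

/-- The inverse of `jdt` on `SYT(λ^□)`: `jdt⁻¹(P) = δ(P) + ijdt(-δ(P) + P)`. -/
def jdtInvFun (n : ℕ) (lam : YoungDiagram) (P : ℕ × ℕ → ℕ) : ℕ × ℕ → ℕ :=
  mapEntries (boxShape lam) (rotval n (deltaOf lam P))
    (ijdtFun n (boxShape lam)
      (mapEntries (boxShape lam) (rotval n (n - deltaOf lam P)) P))

/-- The cyclic descent set of `P ∈ SYT(λ^□)`: `cDes(P) = cDes_rot(jdt⁻¹(P))`. -/
def cDesBox (n : ℕ) (lam : YoungDiagram) (P : ℕ × ℕ → ℕ) : Finset ℕ :=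
  cDesRot n (boxShape lam) (jdtInvFun n lam P)

/-- The restriction of `f` to the entries in `S` is standard: there are no two entries
in `S` in which the smaller one lies weakly south and weakly east of the larger one. -/
def RestrictedStd (cells : Finset (ℕ × ℕ)) (f : ℕ × ℕ → ℕ) (S : Finset ℕ) : Prop :=
  ∀ a ∈ cells, ∀ b ∈ cells, f a ∈ S → f b ∈ S →
    a.1 ≤ b.1 → a.2 ≤ b.2 → a ≠ b → f a < f b

end SchurRot

/-!
Every `P ∈ SYT(λ^□)` is `jdt(k + T)` for a standard `T` with `n` in the box and `k = δ(P)`: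
the box is isolated, so neither straightening moves its entry, and `T = ijdt(-k + P)`.
On these representatives `jdt⁻¹(jdt(k + T)) = k + T` and `ψ` acts by `k ↦ k + 1`, which gives
the `ℤ_n`-action, and `cDes(ψ P) = cDes_rot(1 + (k + T)) = 1 + cDes(P)`.

That `ijdt(-k + ·)` and `jdt(k + ·)` are mutually inverse is checked one elementary step at a
time. Along either algorithm the entries `≤ k` and the entries `> k` stay separately standard,
and every entry `≤ k` directly above or left of an entry `> k` is at most every short entry.
Under this invariant, after relabelling by `-k` the maximal tall entry is exactly the entry
moved by the last `jdt` step, so one `ijdt` step undoes it, and symmetrically.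
-/

namespace SchurRot

open Finset

/-! ### Iterating a map until a predicate holds -/

section IterateUntil

variable {α β : Type*} {p q I : α → Prop} {F G : α → α} {x : α}

def iterateUntil (p : α → Prop) (F : α → α) (x : α) : α :=
  if h : ∃ m, p (F^[m] x) then F^[Nat.find h] x else x

theorem iterateUntil_eq_iterate {N : ℕ} (hN : p (F^[N] x)) (hlt : ∀ j < N, ¬ p (F^[j] x)) :
    iterateUntil p F x = F^[N] x := by
  have h : ∃ m, p (F^[m] x) := ⟨N, hN⟩
  rw [iterateUntil, dif_pos h, (Nat.find_eq_iff h).2 ⟨hN, hlt⟩]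

theorem iterateUntil_spec (h : ∃ m, p (F^[m] x)) : p (iterateUntil p F x) := by
  rw [iterateUntil, dif_pos h]
  exact Nat.find_spec h

theorem iterateUntil_induction (hI : ∀ y, I y → I (F y)) (hx : I x) :
    I (iterateUntil p F x) := by
  unfold iterateUntil
  split_ifs
  · exact Function.Iterate.rec I hx hI _
  · exact hx

theorem iterateUntil_comp {G : β → β} {φ : β → α} {y : β}
    (h : ∀ m, F^[m] (φ y) = φ (G^[m] y)) :
    iterateUntil p F (φ y) = φ (iterateUntil (p ∘ φ) G y) := by
  by_cases hex : ∃ m, p (φ (G^[m] y))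
  · have hfind := Nat.find_spec hex
    have hmin : ∀ j < Nat.find hex, ¬ p (φ (G^[j] y)) := fun j => Nat.find_min hex
    rw [iterateUntil_eq_iterate (N := Nat.find hex) (by rwa [h])
        (fun j hj => by rw [h]; exact hmin j hj),
      iterateUntil_eq_iterate (N := Nat.find hex) hfind hmin, h]
  · have hex' : ¬ ∃ m, p (F^[m] (φ y)) := by simpa only [h] using hex
    rw [iterateUntil, dif_neg hex', iterateUntil, dif_neg (show ¬ ∃ m, (p ∘ φ) (G^[m] y) from hex)]

theorem exists_iterate_of_potential (φ : α → ℕ) (B : ℕ) (hI : ∀ y, I y → I (F y))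
    (hB : ∀ y, I y → φ y ≤ B) (hφ : ∀ y, I y → ¬ p y → φ y < φ (F y)) (hx : I x) :
    ∃ m, p (F^[m] x) := by
  suffices ∀ d y, I y → B - φ y ≤ d → ∃ m, p (F^[m] y) from this _ x hx le_rfl
  intro d
  induction d with
  | zero =>
    intro y hy hd
    by_contra hne
    have := hφ y hy (fun h => hne ⟨0, h⟩)
    have := hB _ (hI y hy)
    omega
  | succ d ih =>
    intro y hy hd
    by_cases hpy : p y
    · exact ⟨0, hpy⟩
    have := hφ y hy hpy
    have := hB _ (hI y hy)
    obtain ⟨m, hm⟩ := ih (F y) (hI y hy) (by omega)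
    exact ⟨m + 1, hm⟩

/-- `G` retraces the `F`-orbit of `x` backwards, and `q` fails at every point before `x`. -/
theorem iterateUntil_iterateUntil
    (hstep : ∀ y, I y → ¬ p y → I (F y) ∧ G (F y) = y ∧ ¬ q (F y))
    (hx : I x) (hqx : q x) (hfin : ∃ m, p (F^[m] x)) :
    iterateUntil q G (iterateUntil p F x) = x := by
  set N := Nat.find hfin
  have hmin : ∀ j < N, ¬ p (F^[j] x) := fun j => Nat.find_min hfin
  have hI : ∀ j ≤ N, I (F^[j] x) := by
    intro j
    induction j with
    | zero => exact fun _ => hx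
    | succ j ih =>
      intro hj
      rw [Function.iterate_succ_apply']
      exact (hstep _ (ih (by omega)) (hmin j (by omega))).1
  have hF : ∀ j < N, F^[N - j] x = F (F^[N - (j + 1)] x) := fun j hj => by
    rw [← Function.iterate_succ_apply' F, show (N - (j + 1)).succ = N - j by omega]
  have hback : ∀ j ≤ N, G^[j] (F^[N] x) = F^[N - j] x := by
    intro j
    induction j with
    | zero => exact fun _ => rfl
    | succ j ih =>
      intro hj
      rw [Function.iterate_succ_apply', ih (by omega), hF j (by omega)]
      exact (hstep _ (hI _ (by omega)) (hmin _ (by omega))).2.1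
  rw [iterateUntil_eq_iterate (Nat.find_spec hfin) hmin]
  refine (iterateUntil_eq_iterate (N := N) ?_ fun j hj => ?_).trans ?_
  · rwa [hback N le_rfl, Nat.sub_self]
  · rw [hback j hj.le, hF j hj]
    exact (hstep _ (hI _ (by omega)) (hmin _ (by omega))).2.2
  · rw [hback N le_rfl, Nat.sub_self, Function.iterate_zero_apply]

end IterateUntil

theorem _root_.Set.bijOn_of_iterate_eq_self {α : Type*} {f : α → α} {s : Set α} {n : ℕ}
    (hf : Set.MapsTo f s s) (hper : ∀ x ∈ s, f^[n] x = x) (hn : s.Nonempty → n ≠ 0) :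
    Set.BijOn f s s := by
  rcases s.eq_empty_or_nonempty with rfl | hs
  · exact Set.bijOn_empty f
  obtain ⟨m, rfl⟩ := Nat.exists_eq_succ_of_ne_zero (hn hs)
  refine Set.InvOn.bijOn ⟨fun x hx => ?_, fun x hx => ?_⟩ hf (hf.iterate m)
  · rw [← Function.iterate_succ_apply f]; exact hper x hx
  · rw [← Function.iterate_succ_apply' f]; exact hper x hx

/-! ### Order-convex sets of cells -/

section Cells

def SuccCell (a b : ℕ × ℕ) : Prop := b = (a.1 + 1, a.2) ∨ b = (a.1, a.2 + 1)

variable {cells : Finset (ℕ × ℕ)} {a b c : ℕ × ℕ}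

theorem SuccCell.lt (h : SuccCell a b) : a < b := by
  rcases h with rfl | rfl <;> simp [Prod.lt_iff]

theorem SuccCell.ne (h : SuccCell a b) : a ≠ b := h.lt.ne

theorem SuccCell.weight_eq (h : SuccCell a b) : b.1 + b.2 = a.1 + a.2 + 1 := by
  rcases h with rfl | rfl <;> simp <;> omega

theorem exists_succCell_le (hab : a < b) : ∃ a', SuccCell a a' ∧ a' ≤ b := by
  rw [Prod.lt_iff] at hab
  by_cases h : a.1 < b.1
  · exact ⟨(a.1 + 1, a.2), Or.inl rfl, Prod.le_def.2 ⟨h, by omega⟩⟩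
  · exact ⟨(a.1, a.2 + 1), Or.inr rfl, Prod.le_def.2 ⟨by omega, by omega⟩⟩

theorem exists_succCell_ge (hab : a < b) : ∃ b', SuccCell b' b ∧ a ≤ b' := by
  rw [Prod.lt_iff] at hab
  by_cases h : a.1 < b.1
  · exact ⟨(b.1 - 1, b.2), Or.inl (Prod.ext (by simp; omega) rfl),
      Prod.le_def.2 ⟨by omega, by omega⟩⟩
  · exact ⟨(b.1, b.2 - 1), Or.inr (Prod.ext rfl (by simp; omega)),
      Prod.le_def.2 ⟨by omega, by omega⟩⟩

theorem mem_of_le_of_le (hg : (cells : Set (ℕ × ℕ)).OrdConnected) (ha : a ∈ cells)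
    (hb : b ∈ cells) (hac : a ≤ c) (hcb : c ≤ b) : c ∈ cells :=
  hg.out ha hb ⟨hac, hcb⟩

/-- Discrete intermediate value property along a monotone lattice path from `a` to `b`. -/
theorem exists_succCell_transition (hg : (cells : Set (ℕ × ℕ)).OrdConnected)
    {p : ℕ × ℕ → Prop} (ha : a ∈ cells) (hb : b ∈ cells)
    (hab : a ≤ b) (hpa : p a) (hpb : ¬ p b) :
    ∃ x ∈ cells, ∃ y ∈ cells, SuccCell x y ∧ a ≤ x ∧ y ≤ b ∧ p x ∧ ¬ p y := by
  obtain ⟨d, hd⟩ : ∃ d, b.1 + b.2 ≤ a.1 + a.2 + d := ⟨b.1 + b.2, by omega⟩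
  induction d generalizing a with
  | zero =>
    rw [Prod.le_def] at hab
    have hab' : a = b := Prod.ext (by omega) (by omega)
    exact absurd (hab' ▸ hpa) hpb
  | succ d ih =>
    have hlt : a < b := lt_of_le_of_ne hab fun h => hpb (h ▸ hpa)
    obtain ⟨a', haa', ha'b⟩ := exists_succCell_le hlt
    have ha' : a' ∈ cells := mem_of_le_of_le hg ha hb haa'.lt.le ha'b
    by_cases hpa' : p a'
    · obtain ⟨x, hx, y, hy, hxy, hax, hyb, hpx, hpy⟩ :=
        ih ha' ha'b hpa' (by have := haa'.weight_eq; omega)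
      exact ⟨x, hx, y, hy, hxy, haa'.lt.le.trans hax, hyb, hpx, hpy⟩
    · exact ⟨a, ha, a', ha', haa', le_rfl, ha'b, hpa, hpa'⟩

theorem lt_of_forall_succCell_lt (hg : (cells : Set (ℕ × ℕ)).OrdConnected) {f : ℕ × ℕ → ℕ}
    (hinj : Set.InjOn f cells)
    (hadj : ∀ v ∈ cells, ∀ w ∈ cells, SuccCell v w → f v < f w)
    (ha : a ∈ cells) (hb : b ∈ cells) (hab : a < b) : f a < f b := by
  have hne : f a ≠ f b := fun h => hab.ne (hinj ha hb h)
  by_contra hba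
  obtain ⟨x, hx, y, hy, hxy, -, -, hpx, hpy⟩ :=
    exists_succCell_transition hg (p := fun z => f a ≤ f z) ha hb hab.le le_rfl (by omega)
  have := hadj x hx y hy hxy
  simp only [not_le] at hpx hpy
  omega

end Cells

section Fillings

variable {n k : ℕ} {cells : Finset (ℕ × ℕ)} {f : ℕ × ℕ → ℕ} {a b c c' : ℕ × ℕ}

theorem IsFillingF.one_le (hf : IsFillingF n cells f) (hc : c ∈ cells) : 1 ≤ f c :=
  (hf.1.mapsTo hc).1

theorem IsFillingF.le (hf : IsFillingF n cells f) (hc : c ∈ cells) : f c ≤ n :=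
  (hf.1.mapsTo hc).2

theorem IsFillingF.inj (hf : IsFillingF n cells f) (hc : c ∈ cells) (hc' : c' ∈ cells)
    (h : f c = f c') : c = c' :=
  hf.1.injOn hc hc' h

theorem IsFillingF.ne (hf : IsFillingF n cells f) (hc : c ∈ cells) (hc' : c' ∈ cells)
    (h : c ≠ c') : f c ≠ f c' :=
  fun h' => h (hf.inj hc hc' h')

theorem isStandardF_iff (hg : (cells : Set (ℕ × ℕ)).OrdConnected) (hf : IsFillingF n cells f) :
    IsStandardF cells f ↔ ∀ v ∈ cells, ∀ w ∈ cells, SuccCell v w → f v < f w := by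
  constructor
  · rintro ⟨hrow, hcol⟩ v hv w hw (rfl | rfl)
    · exact hcol v hv _ hw rfl (by simp)
    · exact hrow v hv _ hw rfl (by simp)
  · intro h
    exact ⟨fun a ha b hb h1 h2 => lt_of_forall_succCell_lt hg hf.1.injOn h ha hb
        (Prod.lt_iff.2 (Or.inr ⟨h1.le, h2⟩)),
      fun a ha b hb h1 h2 => lt_of_forall_succCell_lt hg hf.1.injOn h ha hb
        (Prod.lt_iff.2 (Or.inl ⟨h2, h1.le⟩))⟩

theorem IsStandardF.lt (hg : (cells : Set (ℕ × ℕ)).OrdConnected) (hf : IsFillingF n cells f)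
    (hstd : IsStandardF cells f) (ha : a ∈ cells) (hb : b ∈ cells) (hab : a < b) : f a < f b :=
  lt_of_forall_succCell_lt hg hf.1.injOn ((isStandardF_iff hg hf).1 hstd) ha hb hab

theorem isShort_iff {i : ℕ} :
    IsShort cells f i ↔ ∃ w ∈ cells, ∃ v ∈ cells, SuccCell v w ∧ f w = i ∧ i < f v := by
  constructor
  · rintro ⟨w, hw, rfl, ⟨h1, hv, hlt⟩ | ⟨h1, hv, hlt⟩⟩
    · exact ⟨w, hw, _, hv, Or.inl (Prod.ext (by simp; omega) rfl), rfl, hlt⟩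
    · exact ⟨w, hw, _, hv, Or.inr (Prod.ext rfl (by simp; omega)), rfl, hlt⟩
  · rintro ⟨w, hw, v, hv, rfl | rfl, rfl, hlt⟩
    · exact ⟨_, hw, rfl, Or.inl ⟨by simp, by simpa using hv, by simpa using hlt⟩⟩
    · exact ⟨_, hw, rfl, Or.inr ⟨by simp, by simpa using hv, by simpa using hlt⟩⟩

theorem isTall_iff {i : ℕ} :
    IsTall cells f i ↔ ∃ w ∈ cells, ∃ v ∈ cells, SuccCell w v ∧ f w = i ∧ f v < i := by
  constructor
  · rintro ⟨w, hw, rfl, ⟨hv, hlt⟩ | ⟨hv, hlt⟩⟩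
    · exact ⟨w, hw, _, hv, Or.inl rfl, rfl, hlt⟩
    · exact ⟨w, hw, _, hv, Or.inr rfl, rfl, hlt⟩
  · rintro ⟨w, hw, v, hv, rfl | rfl, rfl, hlt⟩
    · exact ⟨_, hw, rfl, Or.inl ⟨hv, hlt⟩⟩
    · exact ⟨_, hw, rfl, Or.inr ⟨hv, hlt⟩⟩

theorem isStandardF_iff_forall_not_isShort (hg : (cells : Set (ℕ × ℕ)).OrdConnected)
    (hf : IsFillingF n cells f) : IsStandardF cells f ↔ ∀ i, ¬ IsShort cells f i := by
  simp only [isStandardF_iff hg hf, isShort_iff]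
  refine ⟨fun h i ⟨w, hw, v, hv, hvw, hwi, hi⟩ => ?_, fun h v hv w hw hvw => ?_⟩
  · have := h v hv w hw hvw
    omega
  · have := hf.ne hv hw hvw.ne
    by_contra hlt
    exact h _ ⟨w, hw, v, hv, hvw, rfl, by omega⟩

theorem isStandardF_iff_forall_not_isTall (hg : (cells : Set (ℕ × ℕ)).OrdConnected)
    (hf : IsFillingF n cells f) : IsStandardF cells f ↔ ∀ i, ¬ IsTall cells f i := by
  simp only [isStandardF_iff hg hf, isTall_iff]
  refine ⟨fun h i ⟨w, hw, v, hv, hwv, hwi, hi⟩ => ?_, fun h v hv w hw hvw => ?_⟩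
  · have := h w hw v hv hwv
    omega
  · have := hf.ne hv hw hvw.ne
    by_contra hlt
    exact h _ ⟨v, hv, w, hw, hvw, rfl, by omega⟩

theorem mem_shorts_iff (hf : IsFillingF n cells f) {i : ℕ} :
    i ∈ shorts n cells f ↔ IsShort cells f i := by
  refine ⟨fun h => (mem_filter.1 h).2, fun h => mem_filter.2 ⟨?_, h⟩⟩
  obtain ⟨c, hc, rfl, -⟩ := h
  exact mem_Icc.2 ⟨hf.one_le hc, hf.le hc⟩

theorem mem_talls_iff (hf : IsFillingF n cells f) {i : ℕ} :
    i ∈ talls n cells f ↔ IsTall cells f i := by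
  refine ⟨fun h => (mem_filter.1 h).2, fun h => mem_filter.2 ⟨?_, h⟩⟩
  obtain ⟨c, hc, rfl, -⟩ := h
  exact mem_Icc.2 ⟨hf.one_le hc, hf.le hc⟩

theorem cellOf_apply (hf : IsFillingF n cells f) (hc : c ∈ cells) : cellOf cells f (f c) = c := by
  have hrow : rowOf cells f (f c) = c.1 := by
    have : {i | ∃ j, (i, j) ∈ cells ∧ f (i, j) = f c} = {c.1} := by
      ext i
      refine ⟨fun ⟨j, hj, hfj⟩ => congrArg Prod.fst (hf.inj hj hc hfj), ?_⟩
      rintro rfl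
      exact ⟨c.2, hc, rfl⟩
    rw [rowOf, this, csInf_singleton]
  have hcol : {j | (c.1, j) ∈ cells ∧ f (c.1, j) = f c} = {c.2} := by
    ext j
    refine ⟨fun ⟨hj, hfj⟩ => congrArg Prod.snd (hf.inj hj hc hfj), ?_⟩
    rintro rfl
    exact ⟨hc, rfl⟩
  rw [cellOf, hrow, hcol, csInf_singleton]

end Fillings

section Relabel

variable {n k : ℕ} {cells : Finset (ℕ × ℕ)} {f : ℕ × ℕ → ℕ} {φ χ : ℕ → ℕ} {c c' : ℕ × ℕ}

theorem mapEntries_of_mem (hc : c ∈ cells) : mapEntries cells φ f c = φ (f c) := if_pos hc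

theorem mapEntries_mapEntries :
    mapEntries cells φ (mapEntries cells χ f) = mapEntries cells (φ ∘ χ) f := by
  funext c
  by_cases hc : c ∈ cells <;> simp [mapEntries, hc]

theorem mapEntries_congr (h : ∀ c ∈ cells, φ (f c) = χ (f c)) :
    mapEntries cells φ f = mapEntries cells χ f := by
  funext c
  by_cases hc : c ∈ cells <;> simp [mapEntries, hc, h]

theorem IsFillingF.mapEntries_eq_self (hf : IsFillingF n cells f)
    (h : ∀ c ∈ cells, φ (f c) = f c) : mapEntries cells φ f = f := by
  funext c
  by_cases hc : c ∈ cells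
  · simp [mapEntries, hc, h c hc]
  · simp [mapEntries, hc, hf.2 c hc]

theorem IsFillingF.relabel (hf : IsFillingF n cells f)
    (hφ : Set.BijOn φ (Set.Icc 1 n) (Set.Icc 1 n)) : IsFillingF n cells (mapEntries cells φ f) :=
  ⟨(hφ.comp hf.1).congr fun _ hc => (if_pos hc).symm, fun _ hc => if_neg hc⟩

theorem IsFillingF.comp_swap (hf : IsFillingF n cells f) (hc : c ∈ cells) (hc' : c' ∈ cells) :
    IsFillingF n cells (f ∘ Equiv.swap c c') := by
  have hsw : Set.BijOn (Equiv.swap c c') cells cells := by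
    refine Equiv.bijOn _ fun x => ?_
    rcases eq_or_ne x c with rfl | h1
    · simp [hc, hc']
    rcases eq_or_ne x c' with rfl | h2
    · simp [hc, hc']
    · simp [Equiv.swap_apply_of_ne_of_ne h1 h2]
  refine ⟨hf.1.comp hsw, fun d hd => ?_⟩
  rw [Function.comp_apply, Equiv.swap_apply_of_ne_of_ne (by rintro rfl; exact hd hc)
    (by rintro rfl; exact hd hc'), hf.2 d hd]

theorem mapEntries_comp_swap (hc : c ∈ cells) (hc' : c' ∈ cells) :
    mapEntries cells φ (f ∘ Equiv.swap c c') = mapEntries cells φ f ∘ Equiv.swap c c' := by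
  funext d
  by_cases hd : d ∈ cells
  · have : Equiv.swap c c' d ∈ cells := by
      rcases eq_or_ne d c with rfl | h1
      · simpa
      rcases eq_or_ne d c' with rfl | h2
      · simpa
      · rwa [Equiv.swap_apply_of_ne_of_ne h1 h2]
    simp [mapEntries, hd, this]
  · rw [Function.comp_apply, Equiv.swap_apply_of_ne_of_ne (by rintro rfl; exact hd hc)
      (by rintro rfl; exact hd hc')]
    simp [mapEntries, hd]

theorem IsFillingF.mapEntries_swap (hf : IsFillingF n cells f) (hc : c ∈ cells)
    (hc' : c' ∈ cells) : mapEntries cells (Equiv.swap (f c) (f c')) f = f ∘ Equiv.swap c c' := by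
  funext d
  by_cases hd : d ∈ cells
  · rw [mapEntries_of_mem hd, Function.comp_apply]
    rcases eq_or_ne d c with rfl | h1
    · simp
    rcases eq_or_ne d c' with rfl | h2
    · simp
    · rw [Equiv.swap_apply_of_ne_of_ne (hf.ne hd hc h1) (hf.ne hd hc' h2),
        Equiv.swap_apply_of_ne_of_ne h1 h2]
  · rw [Function.comp_apply, Equiv.swap_apply_of_ne_of_ne (by rintro rfl; exact hd hc)
      (by rintro rfl; exact hd hc'), mapEntries, if_neg hd, hf.2 d hd]

theorem rotval_mem (hn : 0 < n) (a e : ℕ) : rotval n a e ∈ Set.Icc 1 n := by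
  have := Nat.mod_lt (e + a - 1) hn
  exact ⟨by simp [rotval], by simp only [rotval]; omega⟩

theorem rotval_rotval {a b e : ℕ} (he : 1 ≤ e) :
    rotval n a (rotval n b e) = rotval n (b + a) e := by
  simp only [rotval, show ∀ x, x + 1 + a - 1 = x + a by omega, Nat.mod_add_mod]
  congr 2
  omega

theorem rotval_self {e : ℕ} (he : e ∈ Set.Icc 1 n) : rotval n n e = e := by
  obtain ⟨h1, h2⟩ := he
  rw [rotval, show e + n - 1 = e - 1 + n by omega, Nat.add_mod_right,
    Nat.mod_eq_of_lt (by omega)]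
  omega

theorem rotval_rotval_sub (hkn : k ≤ n) {e : ℕ} (he : e ∈ Set.Icc 1 n) :
    rotval n k (rotval n (n - k) e) = e := by
  rw [rotval_rotval he.1, Nat.sub_add_cancel hkn, rotval_self he]

theorem rotval_sub_rotval (hkn : k ≤ n) {e : ℕ} (he : e ∈ Set.Icc 1 n) :
    rotval n (n - k) (rotval n k e) = e := by
  rw [rotval_rotval he.1, Nat.add_sub_cancel' hkn, rotval_self he]

theorem rotval_bijOn (hn : 0 < n) (hkn : k ≤ n) :
    Set.BijOn (rotval n k) (Set.Icc 1 n) (Set.Icc 1 n) :=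
  Set.InvOn.bijOn (f' := rotval n (n - k))
    ⟨fun _ he => rotval_sub_rotval hkn he, fun _ he => rotval_rotval_sub hkn he⟩
    (fun e _ => rotval_mem hn k e) (fun e _ => rotval_mem hn (n - k) e)

theorem rotval_of_add_le {e : ℕ} (he : 1 ≤ e) (h : e + k ≤ n) : rotval n k e = e + k := by
  rw [rotval, Nat.mod_eq_of_lt (by omega)]
  omega

theorem rotval_of_lt_add {e : ℕ} (h1 : n < e + k) (h2 : e ≤ n) (hkn : k ≤ n) :
    rotval n k e = e + k - n := by
  rw [rotval, show e + k - 1 = (e + k - 1 - n) + n by omega, Nat.add_mod_right,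
    Nat.mod_eq_of_lt (by omega)]
  omega

theorem rotval_sub_of_le (hkn : k ≤ n) {e : ℕ} (h1 : 1 ≤ e) (h2 : e ≤ k) :
    rotval n (n - k) e = e + (n - k) :=
  rotval_of_add_le h1 (by omega)

theorem rotval_sub_of_lt (hkn : k ≤ n) {e : ℕ} (h1 : k < e) (h2 : e ≤ n) :
    rotval n (n - k) e = e - k := by
  rw [rotval_of_lt_add (by omega) h2 (by omega)]
  omega

theorem rotval_rotval_one {e : ℕ} : rotval n (rotval n 1 k) e = rotval n (k + 1) e := by
  simp only [rotval, Nat.add_sub_cancel, show e + (k % n + 1) - 1 = e + k % n by omega,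
    show e + (k + 1) - 1 = e + k by omega, Nat.add_mod_mod]

end Relabel

/-! ### The elementary steps of `jdt` and `ijdt` -/

section Moves

variable {n : ℕ} {cells : Finset (ℕ × ℕ)} {f : ℕ × ℕ → ℕ} {c c' : ℕ × ℕ}

structure IsJdtMove (cells : Finset (ℕ × ℕ)) (f : ℕ × ℕ → ℕ) (c c' : ℕ × ℕ) : Prop where
  mem : c ∈ cells
  mem' : c' ∈ cells
  succCell : SuccCell c' c
  lt : f c < f c'
  le_of_isShort : ∀ t, IsShort cells f t → f c ≤ t
  le_of_succCell : ∀ w ∈ cells, SuccCell w c → f w ≤ f c'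

structure IsIjdtMove (cells : Finset (ℕ × ℕ)) (f : ℕ × ℕ → ℕ) (c c' : ℕ × ℕ) : Prop where
  mem : c ∈ cells
  mem' : c' ∈ cells
  succCell : SuccCell c c'
  lt : f c' < f c
  le_of_isTall : ∀ t, IsTall cells f t → t ≤ f c
  le_of_succCell : ∀ w ∈ cells, SuccCell c w → f c' ≤ f w

theorem IsJdtMove.isShort (hm : IsJdtMove cells f c c') : IsShort cells f (f c) :=
  isShort_iff.2 ⟨c, hm.mem, c', hm.mem', hm.succCell, rfl, hm.lt⟩

theorem IsIjdtMove.isTall (hm : IsIjdtMove cells f c c') : IsTall cells f (f c) :=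
  isTall_iff.2 ⟨c, hm.mem, c', hm.mem', hm.succCell, rfl, hm.lt⟩

theorem exists_isJdtMove (hf : IsFillingF n cells f) (hne : (shorts n cells f).Nonempty) :
    ∃ c c', IsJdtMove cells f c c' := by
  obtain ⟨c, hc, v, hv, hvc, hfc, hlt⟩ :=
    isShort_iff.1 ((mem_shorts_iff hf).1 (min'_mem _ hne))
  obtain ⟨c', hc', hmax⟩ :=
    exists_max_image (cells.filter (SuccCell · c)) f ⟨v, mem_filter.2 ⟨hv, hvc⟩⟩
  rw [mem_filter] at hc'
  refine ⟨c, c', hc, hc'.1, hc'.2, hfc ▸ hlt.trans_le (hmax v (mem_filter.2 ⟨hv, hvc⟩)),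
    fun t ht => hfc ▸ min'_le _ _ ((mem_shorts_iff hf).2 ht),
    fun w hw hwc => hmax w (mem_filter.2 ⟨hw, hwc⟩)⟩

theorem exists_isIjdtMove (hf : IsFillingF n cells f) (hne : (talls n cells f).Nonempty) :
    ∃ c c', IsIjdtMove cells f c c' := by
  obtain ⟨c, hc, v, hv, hcv, hfc, hlt⟩ :=
    isTall_iff.1 ((mem_talls_iff hf).1 (max'_mem _ hne))
  obtain ⟨c', hc', hmin⟩ :=
    exists_min_image (cells.filter (SuccCell c ·)) f ⟨v, mem_filter.2 ⟨hv, hcv⟩⟩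
  rw [mem_filter] at hc'
  refine ⟨c, c', hc, hc'.1, hc'.2, hfc ▸ (hmin v (mem_filter.2 ⟨hv, hcv⟩)).trans_lt hlt,
    fun t ht => hfc ▸ le_max' _ _ ((mem_talls_iff hf).2 ht),
    fun w hw hcw => hmin w (mem_filter.2 ⟨hw, hcw⟩)⟩

theorem IsJdtMove.stepFun_eq (hf : IsFillingF n cells f) (hm : IsJdtMove cells f c c') :
    stepFun n cells f = f ∘ Equiv.swap c c' := by
  have hshort := (mem_shorts_iff hf).2 hm.isShort
  have hne : (shorts n cells f).Nonempty := ⟨_, hshort⟩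
  have hmin : (shorts n cells f).min' hne = f c := le_antisymm (min'_le _ _ hshort)
    (le_min' _ _ _ fun t ht => hm.le_of_isShort t ((mem_shorts_iff hf).1 ht))
  have hup : (if 1 ≤ c.1 ∧ (c.1 - 1, c.2) ∈ cells then f (c.1 - 1, c.2) else 0) ≤ f c' := by
    split_ifs with h
    · exact hm.le_of_succCell _ h.2 (Or.inl (Prod.ext (by simp; omega) rfl))
    · exact Nat.zero_le _
  have hleft : (if 1 ≤ c.2 ∧ (c.1, c.2 - 1) ∈ cells then f (c.1, c.2 - 1) else 0) ≤ f c' := by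
    split_ifs with h
    · exact hm.le_of_succCell _ h.2 (Or.inr (Prod.ext rfl (by simp; omega)))
    · exact Nat.zero_le _
  have hmax : max (if 1 ≤ c.1 ∧ (c.1 - 1, c.2) ∈ cells then f (c.1 - 1, c.2) else 0)
      (if 1 ≤ c.2 ∧ (c.1, c.2 - 1) ∈ cells then f (c.1, c.2 - 1) else 0) = f c' := by
    refine le_antisymm (max_le hup hleft) ?_
    rcases hm.succCell with h | h <;> rw [h]
    · exact le_max_of_le_left (by simp [hm.mem'])
    · exact le_max_of_le_right (by simp [hm.mem'])
  rw [stepFun, dif_pos hne]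
  simp only [hmin, cellOf_apply hf hm.mem]
  rw [hmax, hf.mapEntries_swap hm.mem hm.mem']

theorem IsIjdtMove.istepFun_eq (hf : IsFillingF n cells f) (hm : IsIjdtMove cells f c c') :
    istepFun n cells f = f ∘ Equiv.swap c c' := by
  have htall := (mem_talls_iff hf).2 hm.isTall
  have hne : (talls n cells f).Nonempty := ⟨_, htall⟩
  have hmax : (talls n cells f).max' hne = f c := le_antisymm
    (max'_le _ _ _ fun t ht => hm.le_of_isTall t ((mem_talls_iff hf).1 ht)) (le_max' _ _ htall)
  have hdown : f c' ≤ if (c.1 + 1, c.2) ∈ cells then f (c.1 + 1, c.2) else n + 1 := by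
    split_ifs with h
    · exact hm.le_of_succCell _ h (Or.inl rfl)
    · exact (hf.le hm.mem').trans (Nat.le_succ n)
  have hright : f c' ≤ if (c.1, c.2 + 1) ∈ cells then f (c.1, c.2 + 1) else n + 1 := by
    split_ifs with h
    · exact hm.le_of_succCell _ h (Or.inr rfl)
    · exact (hf.le hm.mem').trans (Nat.le_succ n)
  have hmin : min (if (c.1 + 1, c.2) ∈ cells then f (c.1 + 1, c.2) else n + 1)
      (if (c.1, c.2 + 1) ∈ cells then f (c.1, c.2 + 1) else n + 1) = f c' := by
    refine le_antisymm ?_ (le_min hdown hright)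
    rcases hm.succCell with h | h <;> rw [← h]
    · exact min_le_of_left_le (by simp [hm.mem'])
    · exact min_le_of_right_le (by simp [hm.mem'])
  rw [istepFun, dif_pos hne]
  simp only [hmax, cellOf_apply hf hm.mem]
  rw [hmin, hf.mapEntries_swap hm.mem hm.mem']

theorem isFillingF_stepFun (hf : IsFillingF n cells f) :
    IsFillingF n cells (stepFun n cells f) := by
  by_cases hne : (shorts n cells f).Nonempty
  · obtain ⟨c, c', hm⟩ := exists_isJdtMove hf hne
    rw [hm.stepFun_eq hf]
    exact hf.comp_swap hm.mem hm.mem'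
  · rwa [stepFun, dif_neg hne]

theorem isFillingF_istepFun (hf : IsFillingF n cells f) :
    IsFillingF n cells (istepFun n cells f) := by
  by_cases hne : (talls n cells f).Nonempty
  · obtain ⟨c, c', hm⟩ := exists_isIjdtMove hf hne
    rw [hm.istepFun_eq hf]
    exact hf.comp_swap hm.mem hm.mem'
  · rwa [istepFun, dif_neg hne]

end Moves

section Termination

variable {n : ℕ} {cells : Finset (ℕ × ℕ)} {f : ℕ × ℕ → ℕ} {x y : ℕ × ℕ}

/-- Both straightening steps move a larger entry to a cell further south-east. -/
def potential (cells : Finset (ℕ × ℕ)) (f : ℕ × ℕ → ℕ) : ℕ :=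
  ∑ c ∈ cells, f c * (c.1 + c.2)

theorem potential_lt_comp_swap (hx : x ∈ cells) (hy : y ∈ cells) (hxy : SuccCell x y)
    (hlt : f y < f x) : potential cells f < potential cells (f ∘ Equiv.swap x y) := by
  have hy' : y ∈ cells.erase x := mem_erase.2 ⟨hxy.ne.symm, hy⟩
  have hsplit : ∀ g : ℕ × ℕ → ℕ, potential cells g = g x * (x.1 + x.2) +
      (g y * (y.1 + y.2) + ∑ d ∈ (cells.erase x).erase y, g d * (d.1 + d.2)) := fun g => by
    rw [potential, ← add_sum_erase _ _ hx, ← add_sum_erase _ _ hy']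
  have hrest : ∑ d ∈ (cells.erase x).erase y, (f ∘ Equiv.swap x y) d * (d.1 + d.2) =
      ∑ d ∈ (cells.erase x).erase y, f d * (d.1 + d.2) := by
    refine sum_congr rfl fun d hd => ?_
    rw [mem_erase, mem_erase] at hd
    rw [Function.comp_apply, Equiv.swap_apply_of_ne_of_ne hd.2.1 hd.1]
  rw [hsplit, hsplit, hrest]
  simp only [Function.comp_apply, Equiv.swap_apply_left, Equiv.swap_apply_right]
  rw [hxy.weight_eq]
  nlinarith

theorem potential_le (hf : IsFillingF n cells f) :
    potential cells f ≤ n * ∑ c ∈ cells, (c.1 + c.2) := by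
  rw [potential, mul_sum]
  exact sum_le_sum fun c hc => Nat.mul_le_mul_right _ (hf.le hc)

theorem exists_isStandardF_iterate_stepFun (hg : (cells : Set (ℕ × ℕ)).OrdConnected)
    (hf : IsFillingF n cells f) : ∃ m, IsStandardF cells ((stepFun n cells)^[m] f) := by
  refine exists_iterate_of_potential (I := IsFillingF n cells) (potential cells) _
    (fun _ => isFillingF_stepFun) (fun _ => potential_le) (fun g hg' hstd => ?_) hf
  obtain ⟨i, hi⟩ : ∃ i, IsShort cells g i := by
    simpa [isStandardF_iff_forall_not_isShort hg hg'] using hstd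
  obtain ⟨c, c', hm⟩ := exists_isJdtMove hg' ⟨i, (mem_shorts_iff hg').2 hi⟩
  rw [hm.stepFun_eq hg', Equiv.swap_comm]
  exact potential_lt_comp_swap hm.mem' hm.mem hm.succCell hm.lt

theorem exists_isStandardF_iterate_istepFun (hg : (cells : Set (ℕ × ℕ)).OrdConnected)
    (hf : IsFillingF n cells f) : ∃ m, IsStandardF cells ((istepFun n cells)^[m] f) := by
  refine exists_iterate_of_potential (I := IsFillingF n cells) (potential cells) _
    (fun _ => isFillingF_istepFun) (fun _ => potential_le) (fun g hg' hstd => ?_) hf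
  obtain ⟨i, hi⟩ : ∃ i, IsTall cells g i := by
    simpa [isStandardF_iff_forall_not_isTall hg hg'] using hstd
  obtain ⟨c, c', hm⟩ := exists_isIjdtMove hg' ⟨i, (mem_talls_iff hg').2 hi⟩
  rw [hm.istepFun_eq hg']
  exact potential_lt_comp_swap hm.mem hm.mem' hm.succCell hm.lt

theorem jdtFun_eq_iterateUntil :
    jdtFun n cells = iterateUntil (IsStandardF cells) (stepFun n cells) := rfl

end Termination

/-! ### The invariant and the step-by-step inversion -/

section SplitStd

variable {n k : ℕ} {cells : Finset (ℕ × ℕ)} {f : ℕ × ℕ → ℕ} {S : Finset ℕ}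
  {a b p q w v : ℕ × ℕ}

theorem RestrictedStd.lt (h : RestrictedStd cells f S) (ha : a ∈ cells) (hb : b ∈ cells)
    (hfa : f a ∈ S) (hfb : f b ∈ S) (hab : a < b) : f a < f b :=
  h a ha b hb hfa hfb (Prod.le_def.1 hab.le).1 (Prod.le_def.1 hab.le).2 hab.ne

theorem RestrictedStd.comp_swap {x y : ℕ × ℕ} (h : RestrictedStd cells f S) (hfx : f x ∉ S)
    (hle : ∀ b ∈ cells, b ≠ x → b ≠ y → f b ∈ S → x ≤ b → f y < f b)
    (hge : ∀ b ∈ cells, b ≠ x → b ≠ y → f b ∈ S → b ≤ x → f b < f y) :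
    RestrictedStd cells (f ∘ Equiv.swap x y) S := by
  intro a ha b hb hfa hfb h1 h2 hab
  simp only [Function.comp_apply] at hfa hfb ⊢
  rcases eq_or_ne a x with rfl | hax
  · rw [Equiv.swap_apply_left] at hfa ⊢
    rcases eq_or_ne b y with rfl | hby
    · rw [Equiv.swap_apply_right] at hfb
      exact absurd hfb hfx
    rw [Equiv.swap_apply_of_ne_of_ne (Ne.symm hab) hby] at hfb ⊢
    exact hle b hb (Ne.symm hab) hby hfb (Prod.le_def.2 ⟨h1, h2⟩)
  rcases eq_or_ne a y with rfl | hay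
  · rw [Equiv.swap_apply_right] at hfa
    exact absurd hfa hfx
  rw [Equiv.swap_apply_of_ne_of_ne hax hay] at hfa ⊢
  rcases eq_or_ne b x with rfl | hbx
  · rw [Equiv.swap_apply_left] at hfb ⊢
    exact hge a ha hax hay hfa (Prod.le_def.2 ⟨h1, h2⟩)
  rcases eq_or_ne b y with rfl | hby
  · rw [Equiv.swap_apply_right] at hfb
    exact absurd hfb hfx
  rw [Equiv.swap_apply_of_ne_of_ne hbx hby] at hfb ⊢
  exact h a ha b hb hfa hfb h1 h2 hab

/-- The invariant along `jdt` run on `k + T` and along `ijdt` run on `-k + P` (relabelled by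
`+k`), for standard `T` and `P`. -/
structure IsSplitStd (n k : ℕ) (cells : Finset (ℕ × ℕ)) (f : ℕ × ℕ → ℕ) : Prop where
  isFillingF : IsFillingF n cells f
  small : RestrictedStd cells f (Icc 1 k)
  big : RestrictedStd cells f (Icc (k + 1) n)
  le_of_isShort : ∀ a ∈ cells, ∀ d ∈ cells, SuccCell a d → f a ≤ k → k < f d →
    ∀ t, IsShort cells f t → f a ≤ t

theorem IsSplitStd.small_lt (hC : IsSplitStd n k cells f) (ha : a ∈ cells) (hb : b ∈ cells)
    (hfa : f a ≤ k) (hfb : f b ≤ k) (hab : a < b) : f a < f b :=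
  hC.small.lt ha hb (mem_Icc.2 ⟨hC.isFillingF.one_le ha, hfa⟩)
    (mem_Icc.2 ⟨hC.isFillingF.one_le hb, hfb⟩) hab

theorem IsSplitStd.big_lt (hC : IsSplitStd n k cells f) (ha : a ∈ cells) (hb : b ∈ cells)
    (hfa : k < f a) (hfb : k < f b) (hab : a < b) : f a < f b :=
  hC.big.lt ha hb (mem_Icc.2 ⟨hfa, hC.isFillingF.le ha⟩) (mem_Icc.2 ⟨hfb, hC.isFillingF.le hb⟩) hab

theorem IsSplitStd.small_le (hC : IsSplitStd n k cells f) (ha : a ∈ cells) (hb : b ∈ cells)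
    (hfa : f a ≤ k) (hfb : f b ≤ k) (hab : a ≤ b) : f a ≤ f b := by
  rcases hab.lt_or_eq with hab | rfl
  exacts [(hC.small_lt ha hb hfa hfb hab).le, le_rfl]

theorem IsSplitStd.big_le (hC : IsSplitStd n k cells f) (ha : a ∈ cells) (hb : b ∈ cells)
    (hfa : k < f a) (hfb : k < f b) (hab : a ≤ b) : f a ≤ f b := by
  rcases hab.lt_or_eq with hab | rfl
  exacts [(hC.big_lt ha hb hfa hfb hab).le, le_rfl]

theorem IsSplitStd.of_isStandardF (hg : (cells : Set (ℕ × ℕ)).OrdConnected)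
    (hf : IsFillingF n cells f) (hstd : IsStandardF cells f) : IsSplitStd n k cells f := by
  have hres : ∀ S, RestrictedStd cells f S := fun _ _ ha _ hb _ _ h1 h2 hab =>
    hstd.lt hg hf ha hb (lt_of_le_of_ne (Prod.le_def.2 ⟨h1, h2⟩) hab)
  exact ⟨hf, hres _, hres _,
    fun _ _ _ _ _ _ _ t ht => absurd ht ((isStandardF_iff_forall_not_isShort hg hf).1 hstd t)⟩

theorem isSplitStd_relabel (hg : (cells : Set (ℕ × ℕ)).OrdConnected) (hn : 0 < n)
    (hkn : k ≤ n) (hT : IsFillingF n cells f) (hstd : IsStandardF cells f) :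
    IsSplitStd n k cells (mapEntries cells (rotval n k) f) := by
  have hval : ∀ c ∈ cells, (f c + k ≤ n ∧ mapEntries cells (rotval n k) f c = f c + k) ∨
      (n < f c + k ∧ mapEntries cells (rotval n k) f c = f c + k - n) := fun c hc => by
    rw [mapEntries_of_mem hc]
    rcases le_or_gt (f c + k) n with h | h
    exacts [Or.inl ⟨h, rotval_of_add_le (hT.one_le hc) h⟩,
      Or.inr ⟨h, rotval_of_lt_add h (hT.le hc) hkn⟩]
  have hlt : ∀ a ∈ cells, ∀ b ∈ cells, a < b → f a < f b := fun a ha b hb => hstd.lt hg hT ha hb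
  refine ⟨hT.relabel (rotval_bijOn hn hkn), ?_, ?_, ?_⟩
  · intro a ha b hb hfa hfb h1 h2 hab
    have := hlt a ha b hb (lt_of_le_of_ne (Prod.le_def.2 ⟨h1, h2⟩) hab)
    have := hT.one_le ha
    have := hT.one_le hb
    rw [mem_Icc] at hfa hfb
    rcases hval a ha with ⟨_, ea⟩ | ⟨_, ea⟩ <;> rcases hval b hb with ⟨_, eb⟩ | ⟨_, eb⟩ <;>
      omega
  · intro a ha b hb hfa hfb h1 h2 hab
    have := hlt a ha b hb (lt_of_le_of_ne (Prod.le_def.2 ⟨h1, h2⟩) hab)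
    have := hT.le ha
    have := hT.le hb
    rw [mem_Icc] at hfa hfb
    rcases hval a ha with ⟨_, ea⟩ | ⟨_, ea⟩ <;> rcases hval b hb with ⟨_, eb⟩ | ⟨_, eb⟩ <;>
      omega
  · intro a ha d hd had h1 h2
    have := hlt a ha d hd had.lt
    have := hT.one_le ha
    have := hT.le hd
    rcases hval a ha with ⟨_, ea⟩ | ⟨_, ea⟩ <;> rcases hval d hd with ⟨_, ed⟩ | ⟨_, ed⟩ <;>
      omega

theorem IsSplitStd.relabel_lt_iff (hkn : k ≤ n) (hC : IsSplitStd n k cells f) (hw : w ∈ cells)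
    (hv : v ∈ cells) (hwv : SuccCell w v) :
    mapEntries cells (rotval n (n - k)) f v < mapEntries cells (rotval n (n - k)) f w ↔
      f w ≤ k ∧ k < f v := by
  have hf := hC.isFillingF
  rw [mapEntries_of_mem hv, mapEntries_of_mem hw]
  have := hf.le hv
  have := hf.le hw
  have := hf.one_le hw
  rcases le_or_gt (f w) k with hw' | hw' <;> rcases le_or_gt (f v) k with hv' | hv'
  · rw [rotval_sub_of_le hkn (hf.one_le hw) hw', rotval_sub_of_le hkn (hf.one_le hv) hv']
    have := hC.small_lt hw hv hw' hv' hwv.lt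
    omega
  · rw [rotval_sub_of_le hkn (hf.one_le hw) hw', rotval_sub_of_lt hkn hv' (hf.le hv)]
    omega
  · rw [rotval_sub_of_lt hkn hw' (hf.le hw), rotval_sub_of_le hkn (hf.one_le hv) hv']
    omega
  · rw [rotval_sub_of_lt hkn hw' (hf.le hw), rotval_sub_of_lt hkn hv' (hf.le hv)]
    have := hC.big_lt hw hv hw' hv' hwv.lt
    omega

theorem IsSplitStd.le_of_isShort_comp_swap (hC : IsSplitStd n k cells f) (hp : p ∈ cells)
    (hq : q ∈ cells) (hfp : f p ≤ k) (hfq : k < f q) (hs : ∀ t, IsShort cells f t → f p ≤ t)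
    (t : ℕ) (ht : IsShort cells (f ∘ Equiv.swap p q) t) : f p ≤ t := by
  obtain ⟨w, hw, v, hv, hvw, rfl, hlt⟩ := isShort_iff.1 ht
  simp only [Function.comp_apply] at hlt ⊢
  rcases eq_or_ne w p with rfl | hwp
  · rw [Equiv.swap_apply_left]; omega
  rcases eq_or_ne w q with rfl | hwq
  · rw [Equiv.swap_apply_right]
  rw [Equiv.swap_apply_of_ne_of_ne hwp hwq] at hlt ⊢
  rcases eq_or_ne v p with rfl | hvp
  · rcases le_or_gt (f w) k with hfw | hfw
    exacts [(hC.small_lt hv hw hfp hfw hvw.lt).le, by omega]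
  rcases eq_or_ne v q with rfl | hvq
  · rw [Equiv.swap_apply_right] at hlt
    exact hs _ (isShort_iff.2 ⟨w, hw, v, hv, hvw, rfl, by omega⟩)
  rw [Equiv.swap_apply_of_ne_of_ne hvp hvq] at hlt
  exact hs _ (isShort_iff.2 ⟨w, hw, v, hv, hvw, rfl, hlt⟩)

theorem IsSplitStd.le_of_succCell_comp_swap (hC : IsSplitStd n k cells f) (hp : p ∈ cells)
    (hfp : f p ≤ k) (hfq : k < f q)
    (hb : ∀ a ∈ cells, ∀ d ∈ cells, SuccCell a d → f a ≤ k → k < f d → f a ≤ f p)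
    (a : ℕ × ℕ) (ha : a ∈ cells) (d : ℕ × ℕ) (hd : d ∈ cells) (had : SuccCell a d)
    (h1 : (f ∘ Equiv.swap p q) a ≤ k) (h2 : k < (f ∘ Equiv.swap p q) d) :
    (f ∘ Equiv.swap p q) a ≤ f p := by
  simp only [Function.comp_apply] at h1 h2 ⊢
  rcases eq_or_ne a p with rfl | hap
  · rw [Equiv.swap_apply_left] at h1; omega
  rcases eq_or_ne a q with rfl | haq
  · rw [Equiv.swap_apply_right]
  rw [Equiv.swap_apply_of_ne_of_ne hap haq] at h1 ⊢
  rcases eq_or_ne d p with rfl | hdp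
  · exact (hC.small_lt ha hd h1 hfp had.lt).le
  rcases eq_or_ne d q with rfl | hdq
  · rw [Equiv.swap_apply_right] at h2; omega
  rw [Equiv.swap_apply_of_ne_of_ne hdp hdq] at h2
  exact hb a ha d hd had h1 h2

theorem IsSplitStd.comp_swap (hC : IsSplitStd n k cells f) (hp : p ∈ cells) (hq : q ∈ cells)
    (hfp : f p ≤ k) (hfq : k < f q)
    (hsmall : RestrictedStd cells (f ∘ Equiv.swap p q) (Icc 1 k))
    (hbig : RestrictedStd cells (f ∘ Equiv.swap p q) (Icc (k + 1) n))
    (hs : ∀ t, IsShort cells f t → f p ≤ t)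
    (hb : ∀ a ∈ cells, ∀ d ∈ cells, SuccCell a d → f a ≤ k → k < f d → f a ≤ f p) :
    IsSplitStd n k cells (f ∘ Equiv.swap p q) :=
  ⟨hC.isFillingF.comp_swap hp hq, hsmall, hbig, fun a ha d hd had h1 h2 t ht =>
    (hC.le_of_succCell_comp_swap hp hfp hfq hb a ha d hd had h1 h2).trans
      (hC.le_of_isShort_comp_swap hp hq hfp hfq hs t ht)⟩

end SplitStd

section Forward

variable {n k : ℕ} {cells : Finset (ℕ × ℕ)} {f : ℕ × ℕ → ℕ} {c c' : ℕ × ℕ}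

theorem IsSplitStd.small_of_isJdtMove (hC : IsSplitStd n k cells f)
    (hm : IsJdtMove cells f c c') : f c ≤ k := by
  by_contra h
  have := hC.big_lt hm.mem' hm.mem (by have := hm.lt; omega) (by omega) hm.succCell.lt
  have := hm.lt
  omega

theorem IsSplitStd.big_of_isJdtMove (hC : IsSplitStd n k cells f)
    (hm : IsJdtMove cells f c c') : k < f c' := by
  by_contra h
  have := hC.small_lt hm.mem' hm.mem (by omega) (hC.small_of_isJdtMove hm) hm.succCell.lt
  have := hm.lt
  omega

theorem IsSplitStd.small_comp_swap_of_isJdtMove (hg : (cells : Set (ℕ × ℕ)).OrdConnected)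
    (hC : IsSplitStd n k cells f) (hm : IsJdtMove cells f c c') :
    RestrictedStd cells (f ∘ Equiv.swap c c') (Icc 1 k) := by
  have hc := hC.small_of_isJdtMove hm
  have hc' := hC.big_of_isJdtMove hm
  rw [Equiv.swap_comm]
  refine hC.small.comp_swap (by rw [mem_Icc]; omega) (fun b hb _ hbc hfb hc'b => ?_)
    (fun b hb _ _ hfb hbc' => hC.small_lt hb hm.mem (mem_Icc.1 hfb).2 hc
      (hbc'.trans_lt hm.succCell.lt))
  rw [mem_Icc] at hfb
  obtain ⟨x, hx, y, hy, hxy, -, hyb, hpx, hpy⟩ :=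
    exists_succCell_transition hg (p := fun z => k < f z) hm.mem' hb hc'b hc' (by omega)
  simp only [not_lt] at hpx hpy
  have h1 : f c ≤ f y := hm.le_of_isShort _ (isShort_iff.2 ⟨y, hy, x, hx, hxy, rfl, by omega⟩)
  have h2 : f y ≤ f b := hC.small_le hy hb hpy hfb.2 hyb
  have h3 := hC.isFillingF.ne hm.mem hb (Ne.symm hbc)
  omega

theorem IsSplitStd.big_comp_swap_of_isJdtMove (hg : (cells : Set (ℕ × ℕ)).OrdConnected)
    (hC : IsSplitStd n k cells f) (hm : IsJdtMove cells f c c') :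
    RestrictedStd cells (f ∘ Equiv.swap c c') (Icc (k + 1) n) := by
  have hc := hC.small_of_isJdtMove hm
  have hc' := hC.big_of_isJdtMove hm
  refine hC.big.comp_swap (by rw [mem_Icc]; omega)
    (fun b hb _ _ hfb hcb => hC.big_lt hm.mem' hb hc' (by rw [mem_Icc] at hfb; omega)
      (hm.succCell.lt.trans_le hcb)) (fun b hb hbc hbc' hfb hbc_le => ?_)
  rw [mem_Icc] at hfb
  obtain ⟨w, hwc, hbw⟩ := exists_succCell_ge (lt_of_le_of_ne hbc_le hbc)
  have hw : w ∈ cells := mem_of_le_of_le hg hb hm.mem hbw hwc.lt.le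
  -- `w` cannot hold a small entry: a short entry below `f c` would sit between `b` and `w`.
  have hwbig : k < f w := by
    by_contra hws
    obtain ⟨x, hx, y, hy, hxy, -, hyw, hpx, hpy⟩ :=
      exists_succCell_transition hg (p := fun z => k < f z) hb hw hbw (by omega) hws
    simp only [not_lt] at hpx hpy
    have h1 := hm.le_of_isShort _ (isShort_iff.2 ⟨y, hy, x, hx, hxy, rfl, by omega⟩)
    have h2 := hC.small_le hy hw hpy (by omega) hyw
    have h3 := hC.small_lt hw hm.mem (by omega) hc hwc.lt
    omega
  have h1 := hC.big_le hb hw (by omega) hwbig hbw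
  have h2 := hm.le_of_succCell w hw hwc
  have h3 := hC.isFillingF.ne hb hm.mem' hbc'
  omega

theorem IsSplitStd.comp_swap_of_isJdtMove (hg : (cells : Set (ℕ × ℕ)).OrdConnected)
    (hC : IsSplitStd n k cells f) (hm : IsJdtMove cells f c c') :
    IsSplitStd n k cells (f ∘ Equiv.swap c c') :=
  hC.comp_swap hm.mem hm.mem' (hC.small_of_isJdtMove hm) (hC.big_of_isJdtMove hm)
    (hC.small_comp_swap_of_isJdtMove hg hm) (hC.big_comp_swap_of_isJdtMove hg hm)
    hm.le_of_isShort fun a ha d hd had h1 h2 => hC.le_of_isShort a ha d hd had h1 h2 _ hm.isShort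

theorem IsSplitStd.isIjdtMove_relabel_comp_swap (hg : (cells : Set (ℕ × ℕ)).OrdConnected)
    (hkn : k ≤ n) (hC : IsSplitStd n k cells f) (hm : IsJdtMove cells f c c') :
    IsIjdtMove cells (mapEntries cells (rotval n (n - k)) (f ∘ Equiv.swap c c')) c' c := by
  have hf := hC.isFillingF
  have hc := hC.small_of_isJdtMove hm
  have hc' := hC.big_of_isJdtMove hm
  have hCg := hC.comp_swap_of_isJdtMove hg hm
  have hgc : (f ∘ Equiv.swap c c') c = f c' := by simp
  have hgc' : (f ∘ Equiv.swap c c') c' = f c := by simp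
  have hρc : mapEntries cells (rotval n (n - k)) (f ∘ Equiv.swap c c') c = f c' - k := by
    rw [mapEntries_of_mem hm.mem, hgc, rotval_sub_of_lt hkn hc' (hf.le hm.mem')]
  have hρc' : mapEntries cells (rotval n (n - k)) (f ∘ Equiv.swap c c') c' = f c + (n - k) := by
    rw [mapEntries_of_mem hm.mem', hgc', rotval_sub_of_le hkn (hf.one_le hm.mem) hc]
  refine ⟨hm.mem', hm.mem, hm.succCell,
    (hCg.relabel_lt_iff hkn hm.mem' hm.mem hm.succCell).2 ⟨hgc' ▸ hc, hgc ▸ hc'⟩,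
    fun t ht => ?_, fun w hw hc'w => ?_⟩
  · obtain ⟨w, hw, v, hv, hwv, rfl, hlt⟩ := isTall_iff.1 ht
    obtain ⟨h1, h2⟩ := (hCg.relabel_lt_iff hkn hw hv hwv).1 hlt
    have := hC.le_of_succCell_comp_swap hm.mem hc hc'
      (fun a ha d hd had h1 h2 => hC.le_of_isShort a ha d hd had h1 h2 _ hm.isShort)
      w hw v hv hwv h1 h2
    rw [hρc', mapEntries_of_mem hw, rotval_sub_of_le hkn (hCg.isFillingF.one_le hw) h1]
    omega
  · rcases eq_or_ne w c with rfl | hwc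
    · exact le_rfl
    have hgw : (f ∘ Equiv.swap c c') w = f w := by
      simp [Equiv.swap_apply_of_ne_of_ne hwc hc'w.ne.symm]
    rw [hρc, mapEntries_of_mem hw, hgw]
    rcases le_or_gt (f w) k with hfw | hfw
    · rw [rotval_sub_of_le hkn (hf.one_le hw) hfw]
      have := hf.le hm.mem'
      omega
    · rw [rotval_sub_of_lt hkn hfw (hf.le hw)]
      have := hC.big_lt hm.mem' hw hc' hfw hc'w.lt
      omega

end Forward

section Backward

variable {n k : ℕ} {cells : Finset (ℕ × ℕ)} {f : ℕ × ℕ → ℕ} {e e' : ℕ × ℕ}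

theorem IsSplitStd.small_big_of_isIjdtMove (hkn : k ≤ n) (hC : IsSplitStd n k cells f)
    (hm : IsIjdtMove cells (mapEntries cells (rotval n (n - k)) f) e e') : f e ≤ k ∧ k < f e' :=
  (hC.relabel_lt_iff hkn hm.mem hm.mem' hm.succCell).1 hm.lt

theorem IsSplitStd.le_of_isIjdtMove (hkn : k ≤ n) (hC : IsSplitStd n k cells f)
    (hm : IsIjdtMove cells (mapEntries cells (rotval n (n - k)) f) e e') :
    ∀ a ∈ cells, ∀ d ∈ cells, SuccCell a d → f a ≤ k → k < f d → f a ≤ f e := by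
  intro a ha d hd had h1 h2
  have hf := hC.isFillingF
  have := hm.le_of_isTall _ (isTall_iff.2 ⟨a, ha, d, hd, had, rfl,
    (hC.relabel_lt_iff hkn ha hd had).2 ⟨h1, h2⟩⟩)
  rw [mapEntries_of_mem ha, mapEntries_of_mem hm.mem, rotval_sub_of_le hkn (hf.one_le ha) h1,
    rotval_sub_of_le hkn (hf.one_le hm.mem) (hC.small_big_of_isIjdtMove hkn hm).1] at this
  omega

theorem IsSplitStd.le_of_succCell_of_isIjdtMove (hkn : k ≤ n) (hC : IsSplitStd n k cells f)
    (hm : IsIjdtMove cells (mapEntries cells (rotval n (n - k)) f) e e') :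
    ∀ w ∈ cells, SuccCell e w → k < f w → f e' ≤ f w := by
  intro w hw hew hfw
  have hf := hC.isFillingF
  have := hm.le_of_succCell w hw hew
  rw [mapEntries_of_mem hw, mapEntries_of_mem hm.mem', rotval_sub_of_lt hkn hfw (hf.le hw),
    rotval_sub_of_lt hkn (hC.small_big_of_isIjdtMove hkn hm).2 (hf.le hm.mem')] at this
  omega

theorem IsSplitStd.small_comp_swap_of_isIjdtMove (hg : (cells : Set (ℕ × ℕ)).OrdConnected)
    (hkn : k ≤ n) (hC : IsSplitStd n k cells f)
    (hm : IsIjdtMove cells (mapEntries cells (rotval n (n - k)) f) e e') :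
    RestrictedStd cells (f ∘ Equiv.swap e e') (Icc 1 k) := by
  obtain ⟨he, he'⟩ := hC.small_big_of_isIjdtMove hkn hm
  rw [Equiv.swap_comm]
  refine hC.small.comp_swap (by rw [mem_Icc]; omega)
    (fun b hb _ _ hfb he'b => hC.small_lt hm.mem hb he (mem_Icc.1 hfb).2
      (hm.succCell.lt.trans_le he'b)) (fun b hb _ hbe hfb hbe' => ?_)
  rw [mem_Icc] at hfb
  obtain ⟨x, hx, y, hy, hxy, hbx, -, hpx, hpy⟩ :=
    exists_succCell_transition hg (p := fun z => f z ≤ k) hb hm.mem' hbe' hfb.2 (by omega)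
  simp only [not_le] at hpy
  have h1 := hC.le_of_isIjdtMove hkn hm x hx y hy hxy hpx hpy
  have h2 := hC.small_le hb hx hfb.2 hpx hbx
  have h3 := hC.isFillingF.ne hb hm.mem hbe
  omega

theorem IsSplitStd.big_comp_swap_of_isIjdtMove (hg : (cells : Set (ℕ × ℕ)).OrdConnected)
    (hkn : k ≤ n) (hC : IsSplitStd n k cells f)
    (hm : IsIjdtMove cells (mapEntries cells (rotval n (n - k)) f) e e') :
    RestrictedStd cells (f ∘ Equiv.swap e e') (Icc (k + 1) n) := by
  obtain ⟨he, he'⟩ := hC.small_big_of_isIjdtMove hkn hm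
  refine hC.big.comp_swap (by rw [mem_Icc]; omega) (fun b hb hbe hbe' hfb heb => ?_)
    (fun b hb _ _ hfb hbe => hC.big_lt hb hm.mem' (by rw [mem_Icc] at hfb; omega) he'
      (hbe.trans_lt hm.succCell.lt))
  rw [mem_Icc] at hfb
  obtain ⟨x, hx, y, hy, hxy, hex, hyb, hpx, hpy⟩ :=
    exists_succCell_transition hg (p := fun z => f z ≤ k) hm.mem hb heb he (by omega)
  simp only [not_le] at hpy
  -- the transition starts at `e`: otherwise `f x ≤ k` would beat the maximal choice of `f e`.
  obtain rfl : x = e := by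
    by_contra hxe
    have := hC.small_lt hm.mem hx he hpx (lt_of_le_of_ne hex (Ne.symm hxe))
    have := hC.le_of_isIjdtMove hkn hm x hx y hy hxy hpx hpy
    omega
  have h1 := hC.le_of_succCell_of_isIjdtMove hkn hm y hy hxy hpy
  have h2 := hC.big_le hy hb hpy (by omega) hyb
  have h3 := hC.isFillingF.ne hm.mem' hb (Ne.symm hbe')
  omega

theorem IsSplitStd.comp_swap_of_isIjdtMove (hg : (cells : Set (ℕ × ℕ)).OrdConnected)
    (hkn : k ≤ n) (hC : IsSplitStd n k cells f)
    (hm : IsIjdtMove cells (mapEntries cells (rotval n (n - k)) f) e e') :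
    IsSplitStd n k cells (f ∘ Equiv.swap e e') :=
  hC.comp_swap hm.mem hm.mem' (hC.small_big_of_isIjdtMove hkn hm).1
    (hC.small_big_of_isIjdtMove hkn hm).2 (hC.small_comp_swap_of_isIjdtMove hg hkn hm)
    (hC.big_comp_swap_of_isIjdtMove hg hkn hm)
    (hC.le_of_isShort e hm.mem e' hm.mem' hm.succCell (hC.small_big_of_isIjdtMove hkn hm).1
      (hC.small_big_of_isIjdtMove hkn hm).2) (hC.le_of_isIjdtMove hkn hm)

theorem IsSplitStd.isJdtMove_comp_swap (hkn : k ≤ n) (hC : IsSplitStd n k cells f)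
    (hm : IsIjdtMove cells (mapEntries cells (rotval n (n - k)) f) e e') :
    IsJdtMove cells (f ∘ Equiv.swap e e') e' e := by
  obtain ⟨he, he'⟩ := hC.small_big_of_isIjdtMove hkn hm
  have hge : (f ∘ Equiv.swap e e') e = f e' := by simp
  have hge' : (f ∘ Equiv.swap e e') e' = f e := by simp
  refine ⟨hm.mem', hm.mem, hm.succCell, by rw [hge, hge']; omega, fun t ht => hge' ▸
    hC.le_of_isShort_comp_swap hm.mem hm.mem' he he'
      (hC.le_of_isShort e hm.mem e' hm.mem' hm.succCell he he') t ht, fun w hw hwe' => ?_⟩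
  rcases eq_or_ne w e with rfl | hwe
  · exact le_rfl
  rw [hge, Function.comp_apply, Equiv.swap_apply_of_ne_of_ne hwe hwe'.ne]
  rcases le_or_gt (f w) k with hfw | hfw
  · omega
  · exact (hC.big_lt hw hm.mem' hfw he' hwe'.lt).le

end Backward

section Straightening

variable {n k : ℕ} {cells : Finset (ℕ × ℕ)} {f T P : ℕ × ℕ → ℕ}

theorem IsFillingF.relabel_relabel_sub (hf : IsFillingF n cells f) (hkn : k ≤ n) :
    mapEntries cells (rotval n k) (mapEntries cells (rotval n (n - k)) f) = f := by
  rw [mapEntries_mapEntries]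
  exact hf.mapEntries_eq_self fun c hc => rotval_rotval_sub hkn ⟨hf.one_le hc, hf.le hc⟩

theorem IsFillingF.relabel_sub_relabel (hf : IsFillingF n cells f) (hkn : k ≤ n) :
    mapEntries cells (rotval n (n - k)) (mapEntries cells (rotval n k) f) = f := by
  rw [mapEntries_mapEntries]
  exact hf.mapEntries_eq_self fun c hc => rotval_sub_rotval hkn ⟨hf.one_le hc, hf.le hc⟩

def conjIstep (n k : ℕ) (cells : Finset (ℕ × ℕ)) (f : ℕ × ℕ → ℕ) : ℕ × ℕ → ℕ :=
  mapEntries cells (rotval n k) (istepFun n cells (mapEntries cells (rotval n (n - k)) f))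

theorem isFillingF_conjIstep (hn : 0 < n) (hkn : k ≤ n) (hf : IsFillingF n cells f) :
    IsFillingF n cells (conjIstep n k cells f) :=
  (isFillingF_istepFun (hf.relabel (rotval_bijOn hn (Nat.sub_le n k)))).relabel
    (rotval_bijOn hn hkn)

theorem iterate_istepFun_relabel (hn : 0 < n) (hkn : k ≤ n) (hf : IsFillingF n cells f) (m : ℕ) :
    (istepFun n cells)^[m] (mapEntries cells (rotval n (n - k)) f) =
      mapEntries cells (rotval n (n - k)) ((conjIstep n k cells)^[m] f) := by
  induction m with
  | zero => rfl
  | succ m ih =>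
    have hfm : IsFillingF n cells ((conjIstep n k cells)^[m] f) :=
      Function.Iterate.rec _ hf (fun _ => isFillingF_conjIstep hn hkn) m
    rw [Function.iterate_succ_apply', ih, Function.iterate_succ_apply', conjIstep,
      (isFillingF_istepFun (hfm.relabel (rotval_bijOn hn (Nat.sub_le n k)))).relabel_sub_relabel
        hkn]

theorem IsSplitStd.stepFun_undo (hg : (cells : Set (ℕ × ℕ)).OrdConnected) (hn : 0 < n)
    (hkn : k ≤ n) (hC : IsSplitStd n k cells f) (hstd : ¬ IsStandardF cells f) :
    IsSplitStd n k cells (stepFun n cells f) ∧ conjIstep n k cells (stepFun n cells f) = f ∧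
      ¬ IsStandardF cells (mapEntries cells (rotval n (n - k)) (stepFun n cells f)) := by
  have hf := hC.isFillingF
  obtain ⟨i, hi⟩ : ∃ i, IsShort cells f i := by
    simpa [isStandardF_iff_forall_not_isShort hg hf] using hstd
  obtain ⟨c, c', hm⟩ := exists_isJdtMove hf ⟨i, (mem_shorts_iff hf).2 hi⟩
  have hCg := hC.comp_swap_of_isJdtMove hg hm
  have hm' := hC.isIjdtMove_relabel_comp_swap hg hkn hm
  have hback : (f ∘ Equiv.swap c c') ∘ Equiv.swap c' c = f := by
    rw [Equiv.swap_comm c' c]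
    funext d
    simp
  rw [hm.stepFun_eq hf]
  refine ⟨hCg, ?_, fun hstd' => ?_⟩
  · rw [conjIstep, hm'.istepFun_eq (hCg.isFillingF.relabel (rotval_bijOn hn (Nat.sub_le n k))),
      ← mapEntries_comp_swap hm.mem' hm.mem, hback, hf.relabel_relabel_sub hkn]
  · exact (isStandardF_iff_forall_not_isTall hg (hCg.isFillingF.relabel
      (rotval_bijOn hn (Nat.sub_le n k)))).1 hstd' _ hm'.isTall

theorem IsSplitStd.conjIstep_undo (hg : (cells : Set (ℕ × ℕ)).OrdConnected) (hn : 0 < n)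
    (hkn : k ≤ n) (hC : IsSplitStd n k cells f)
    (hstd : ¬ IsStandardF cells (mapEntries cells (rotval n (n - k)) f)) :
    IsSplitStd n k cells (conjIstep n k cells f) ∧
      stepFun n cells (conjIstep n k cells f) = f ∧
      ¬ IsStandardF cells (conjIstep n k cells f) := by
  have hf := hC.isFillingF
  have hρf := hf.relabel (rotval_bijOn hn (Nat.sub_le n k))
  obtain ⟨i, hi⟩ : ∃ i, IsTall cells (mapEntries cells (rotval n (n - k)) f) i := by
    simpa [isStandardF_iff_forall_not_isTall hg hρf] using hstd
  obtain ⟨e, e', hm⟩ := exists_isIjdtMove hρf ⟨i, (mem_talls_iff hρf).2 hi⟩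
  have hconj : conjIstep n k cells f = f ∘ Equiv.swap e e' := by
    rw [conjIstep, hm.istepFun_eq hρf, mapEntries_comp_swap hm.mem hm.mem',
      hf.relabel_relabel_sub hkn]
  have hCg := hC.comp_swap_of_isIjdtMove hg hkn hm
  have hm' := hC.isJdtMove_comp_swap hkn hm
  have hback : (f ∘ Equiv.swap e e') ∘ Equiv.swap e' e = f := by
    rw [Equiv.swap_comm e' e]
    funext d
    simp
  rw [hconj]
  exact ⟨hCg, by rw [hm'.stepFun_eq hCg.isFillingF, hback],
    fun hstd' => (isStandardF_iff_forall_not_isShort hg hCg.isFillingF).1 hstd' _ hm'.isShort⟩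

theorem isFillingF_jdtFun (hf : IsFillingF n cells f) : IsFillingF n cells (jdtFun n cells f) :=
  iterateUntil_induction (fun _ => isFillingF_stepFun) hf

theorem isFillingF_ijdtFun (hf : IsFillingF n cells f) : IsFillingF n cells (ijdtFun n cells f) :=
  iterateUntil_induction (fun _ => isFillingF_istepFun) hf

theorem isStandardF_jdtFun (hg : (cells : Set (ℕ × ℕ)).OrdConnected) (hf : IsFillingF n cells f) :
    IsStandardF cells (jdtFun n cells f) :=
  iterateUntil_spec (exists_isStandardF_iterate_stepFun hg hf)

theorem isStandardF_ijdtFun (hg : (cells : Set (ℕ × ℕ)).OrdConnected)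
    (hf : IsFillingF n cells f) : IsStandardF cells (ijdtFun n cells f) :=
  iterateUntil_spec (exists_isStandardF_iterate_istepFun hg hf)

theorem ijdtFun_relabel (hn : 0 < n) (hkn : k ≤ n) (hf : IsFillingF n cells f) :
    ijdtFun n cells (mapEntries cells (rotval n (n - k)) f) =
      mapEntries cells (rotval n (n - k))
        (iterateUntil (IsStandardF cells ∘ mapEntries cells (rotval n (n - k)))
          (conjIstep n k cells) f) :=
  iterateUntil_comp (iterate_istepFun_relabel hn hkn hf)

theorem ijdtFun_relabel_jdtFun (hg : (cells : Set (ℕ × ℕ)).OrdConnected) (hn : 0 < n)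
    (hkn : k ≤ n) (hT : IsFillingF n cells T) (hstd : IsStandardF cells T) :
    ijdtFun n cells (mapEntries cells (rotval n (n - k))
      (jdtFun n cells (mapEntries cells (rotval n k) T))) = T := by
  have hx := hT.relabel (rotval_bijOn hn hkn)
  rw [ijdtFun_relabel hn hkn (isFillingF_jdtFun hx), jdtFun_eq_iterateUntil,
    iterateUntil_iterateUntil (I := IsSplitStd n k cells)
      (fun _ hy hstd' => hy.stepFun_undo hg hn hkn hstd') (isSplitStd_relabel hg hn hkn hT hstd)
      (by simpa only [Function.comp_apply, hT.relabel_sub_relabel hkn] using hstd)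
      (exists_isStandardF_iterate_stepFun hg hx),
    hT.relabel_sub_relabel hkn]

theorem jdtFun_relabel_ijdtFun (hg : (cells : Set (ℕ × ℕ)).OrdConnected) (hn : 0 < n)
    (hkn : k ≤ n) (hP : IsFillingF n cells P) (hstd : IsStandardF cells P) :
    jdtFun n cells (mapEntries cells (rotval n k)
      (ijdtFun n cells (mapEntries cells (rotval n (n - k)) P))) = P := by
  have hfin : ∃ m, (IsStandardF cells ∘ mapEntries cells (rotval n (n - k)))
      ((conjIstep n k cells)^[m] P) := by
    simpa only [Function.comp_apply, ← iterate_istepFun_relabel hn hkn hP] using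
      exists_isStandardF_iterate_istepFun hg (hP.relabel (rotval_bijOn hn (Nat.sub_le n k)))
  rw [ijdtFun_relabel hn hkn hP, IsFillingF.relabel_relabel_sub _ hkn, jdtFun_eq_iterateUntil]
  · exact iterateUntil_iterateUntil (I := IsSplitStd n k cells)
      (fun _ hy hstd' => hy.conjIstep_undo hg hn hkn hstd') (IsSplitStd.of_isStandardF hg hP hstd)
      hstd hfin
  · exact iterateUntil_induction (fun _ => isFillingF_conjIstep hn hkn) hP

end Straightening

/-! ### The shape `λ^□` and the map `ψ` -/

section Isolated

variable {n : ℕ} {cells : Finset (ℕ × ℕ)} {f : ℕ × ℕ → ℕ} {b : ℕ × ℕ}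

theorem stepFun_apply_of_isolated (hf : IsFillingF n cells f)
    (hb : ∀ x ∈ cells, ¬ SuccCell x b ∧ ¬ SuccCell b x) : stepFun n cells f b = f b := by
  by_cases hne : (shorts n cells f).Nonempty
  · obtain ⟨c, c', hm⟩ := exists_isJdtMove hf hne
    rw [hm.stepFun_eq hf, Function.comp_apply, Equiv.swap_apply_of_ne_of_ne]
    · rintro rfl; exact (hb c' hm.mem').1 hm.succCell
    · rintro rfl; exact (hb c hm.mem).2 hm.succCell
  · rw [stepFun, dif_neg hne]

theorem istepFun_apply_of_isolated (hf : IsFillingF n cells f)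
    (hb : ∀ x ∈ cells, ¬ SuccCell x b ∧ ¬ SuccCell b x) : istepFun n cells f b = f b := by
  by_cases hne : (talls n cells f).Nonempty
  · obtain ⟨c, c', hm⟩ := exists_isIjdtMove hf hne
    rw [hm.istepFun_eq hf, Function.comp_apply, Equiv.swap_apply_of_ne_of_ne]
    · rintro rfl; exact (hb c' hm.mem').2 hm.succCell
    · rintro rfl; exact (hb c hm.mem).1 hm.succCell
  · rw [istepFun, dif_neg hne]

theorem jdtFun_apply_of_isolated (hf : IsFillingF n cells f)
    (hb : ∀ x ∈ cells, ¬ SuccCell x b ∧ ¬ SuccCell b x) : jdtFun n cells f b = f b :=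
  (iterateUntil_induction (I := fun g => IsFillingF n cells g ∧ g b = f b)
    (fun _ hg => ⟨isFillingF_stepFun hg.1, (stepFun_apply_of_isolated hg.1 hb).trans hg.2⟩)
    ⟨hf, rfl⟩).2

theorem ijdtFun_apply_of_isolated (hf : IsFillingF n cells f)
    (hb : ∀ x ∈ cells, ¬ SuccCell x b ∧ ¬ SuccCell b x) : ijdtFun n cells f b = f b :=
  (iterateUntil_induction (I := fun g => IsFillingF n cells g ∧ g b = f b)
    (fun _ hg => ⟨isFillingF_istepFun hg.1, (istepFun_apply_of_isolated hg.1 hb).trans hg.2⟩)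
    ⟨hf, rfl⟩).2

end Isolated

section BoxShape

variable {lam : YoungDiagram} {c : ℕ × ℕ}

theorem mem_boxShape :
    c ∈ boxShape lam ↔ c = boxCell lam ∨ (1 ≤ c.1 ∧ (c.1 - 1, c.2) ∈ lam) := by
  rw [boxShape, mem_insert, mem_image]
  refine or_congr Iff.rfl ⟨?_, fun ⟨h1, h2⟩ => ⟨_, h2, Prod.ext (by simp; omega) rfl⟩⟩
  rintro ⟨p, hp, rfl⟩
  exact ⟨by simp, by simpa using hp⟩

theorem boxCell_mem_boxShape : boxCell lam ∈ boxShape lam := mem_boxShape.2 (Or.inl rfl)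

theorem eq_boxCell_of_mem_boxShape (hc : c ∈ boxShape lam) (h0 : c.1 = 0) : c = boxCell lam :=
  (mem_boxShape.1 hc).resolve_right fun h => by omega

theorem lt_rowLen_of_mem_boxShape (hc : c ∈ boxShape lam) (hne : c ≠ boxCell lam) :
    1 ≤ c.1 ∧ c.2 < lam.rowLen 0 := by
  obtain ⟨h1, h2⟩ := (mem_boxShape.1 hc).resolve_left hne
  exact ⟨h1, (YoungDiagram.mem_iff_lt_rowLen.1 h2).trans_le (lam.rowLen_anti 0 _ (Nat.zero_le _))⟩

theorem ordConnected_boxShape : ((boxShape lam : Finset (ℕ × ℕ)) : Set (ℕ × ℕ)).OrdConnected := by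
  refine ⟨fun a ha b hb c ⟨hac, hcb⟩ => ?_⟩
  rw [Prod.le_def] at hac hcb
  rcases eq_or_ne b (boxCell lam) with rfl | hbne
  · obtain rfl := eq_boxCell_of_mem_boxShape ha (by simp [boxCell] at hcb; omega)
    obtain rfl : c = boxCell lam := Prod.ext (by simp [boxCell] at hcb ⊢; omega) (by omega)
    exact boxCell_mem_boxShape
  obtain ⟨hb1, hb2⟩ := lt_rowLen_of_mem_boxShape hb hbne
  rcases eq_or_ne a (boxCell lam) with rfl | hane
  · simp [boxCell] at hac
    omega
  have ha1 := (lt_rowLen_of_mem_boxShape ha hane).1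
  have hb := ((mem_boxShape.1 hb).resolve_left hbne).2
  exact mem_boxShape.2 (Or.inr ⟨by omega, lam.up_left_mem (by omega) hcb.2 hb⟩)

theorem boxCell_isolated :
    ∀ x ∈ boxShape lam, ¬ SuccCell x (boxCell lam) ∧ ¬ SuccCell (boxCell lam) x := by
  intro x hx
  refine ⟨?_, ?_⟩ <;> rintro (h | h)
  · simp [boxCell, Prod.ext_iff] at h
  · obtain rfl := eq_boxCell_of_mem_boxShape hx (by simp [boxCell, Prod.ext_iff] at h; omega)
    simp [Prod.ext_iff] at h
  · have := lt_rowLen_of_mem_boxShape hx (by rw [h]; simp [boxCell, Prod.ext_iff])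
    simp [h, boxCell] at this
  · have := eq_boxCell_of_mem_boxShape hx (by rw [h]; rfl)
    simp [h, boxCell, Prod.ext_iff] at this

end BoxShape

section CyclicDescents

variable {n : ℕ} {cells : Finset (ℕ × ℕ)} {R : ℕ × ℕ → ℕ}

theorem rowOf_relabel_one (hf : IsFillingF n cells R) {e : ℕ} (he : e ∈ Set.Icc 1 n) :
    rowOf cells (mapEntries cells (rotval n 1) R) e = rowOf cells R (rotval n (n - 1) e) := by
  have hn : 1 ≤ n := he.1.trans he.2
  unfold rowOf
  congr 1
  ext i
  refine exists_congr fun j => and_congr_right fun hj => ?_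
  rw [mapEntries_of_mem hj]
  constructor
  · rintro rfl
    exact (rotval_sub_rotval hn ⟨hf.one_le hj, hf.le hj⟩).symm
  · intro h
    rw [h, rotval_rotval_sub hn he]

theorem cDesRot_relabel_one (hn : 0 < n) (hf : IsFillingF n cells R) :
    cDesRot n cells (mapEntries cells (rotval n 1) R) = (cDesRot n cells R).image (rotval n 1) := by
  have hmem := rotval_mem hn
  have hcancel : ∀ e ∈ Set.Icc 1 n, rotval n (n - 1) (rotval n 1 e) = e :=
    fun e he => rotval_sub_rotval hn he
  ext x
  simp only [cDesRot, mem_filter, mem_image, Finset.mem_Icc]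
  constructor
  · rintro ⟨hx, hlt⟩
    refine ⟨rotval n (n - 1) x, ⟨hmem _ _, ?_⟩, rotval_rotval_sub hn hx⟩
    rwa [rowOf_relabel_one hf hx, rowOf_relabel_one hf (hmem _ _), hcancel x hx,
      ← rotval_rotval_sub hn hx, hcancel _ (hmem _ _)] at hlt
  · rintro ⟨i, ⟨hi, hlt⟩, rfl⟩
    refine ⟨hmem _ _, ?_⟩
    rwa [rowOf_relabel_one hf (hmem _ _), rowOf_relabel_one hf (hmem _ _), hcancel i hi,
      hcancel _ (hmem _ _)]

end CyclicDescents

section Psi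

variable {n k : ℕ} {lam : YoungDiagram} {T P : ℕ × ℕ → ℕ}

def psi (n : ℕ) (lam : YoungDiagram) (P : ℕ × ℕ → ℕ) : ℕ × ℕ → ℕ :=
  jdtFun n (boxShape lam) (mapEntries (boxShape lam) (rotval n 1) (jdtInvFun n lam P))

theorem deltaOf_jdtFun_relabel (hk : k ∈ Set.Icc 1 n) (hT : IsFillingF n (boxShape lam) T)
    (hTbox : T (boxCell lam) = n) :
    deltaOf lam (jdtFun n (boxShape lam) (mapEntries (boxShape lam) (rotval n k) T)) = k := by
  have hn : 0 < n := hk.1.trans hk.2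
  rw [deltaOf, jdtFun_apply_of_isolated (hT.relabel (rotval_bijOn hn hk.2)) boxCell_isolated,
    mapEntries_of_mem boxCell_mem_boxShape, hTbox, rotval_of_lt_add (by have := hk.1; omega) le_rfl
    hk.2]
  omega

theorem jdtInvFun_jdtFun_relabel (hk : k ∈ Set.Icc 1 n) (hT : IsFillingF n (boxShape lam) T)
    (hstd : IsStandardF (boxShape lam) T) (hTbox : T (boxCell lam) = n) :
    jdtInvFun n lam (jdtFun n (boxShape lam) (mapEntries (boxShape lam) (rotval n k) T)) =
      mapEntries (boxShape lam) (rotval n k) T := by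
  have hn : 0 < n := hk.1.trans hk.2
  rw [jdtInvFun, deltaOf_jdtFun_relabel hk hT hTbox,
    ijdtFun_relabel_jdtFun ordConnected_boxShape hn hk.2 hT hstd]

theorem exists_eq_jdtFun_relabel (hP : IsFillingF n (boxShape lam) P)
    (hstd : IsStandardF (boxShape lam) P) :
    ∃ T k, k ∈ Set.Icc 1 n ∧ IsFillingF n (boxShape lam) T ∧ IsStandardF (boxShape lam) T ∧
      T (boxCell lam) = n ∧
      P = jdtFun n (boxShape lam) (mapEntries (boxShape lam) (rotval n k) T) := by
  have hk1 : 1 ≤ deltaOf lam P := hP.one_le boxCell_mem_boxShape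
  have hkn : deltaOf lam P ≤ n := hP.le boxCell_mem_boxShape
  have hn : 0 < n := by omega
  have hρP := hP.relabel (rotval_bijOn hn (Nat.sub_le n (deltaOf lam P)))
  refine ⟨_, _, ⟨hk1, hkn⟩, isFillingF_ijdtFun hρP, isStandardF_ijdtFun ordConnected_boxShape hρP,
    ?_, (jdtFun_relabel_ijdtFun ordConnected_boxShape hn hkn hP hstd).symm⟩
  rw [ijdtFun_apply_of_isolated hρP boxCell_isolated, mapEntries_of_mem boxCell_mem_boxShape]
  change rotval n (n - deltaOf lam P) (deltaOf lam P) = n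
  rw [rotval_sub_of_le hkn hk1 le_rfl]
  omega

theorem relabel_one_relabel (hT : IsFillingF n (boxShape lam) T) :
    mapEntries (boxShape lam) (rotval n 1) (mapEntries (boxShape lam) (rotval n k) T) =
      mapEntries (boxShape lam) (rotval n (rotval n 1 k)) T := by
  rw [mapEntries_mapEntries]
  exact mapEntries_congr fun c hc => by
    rw [Function.comp_apply, rotval_rotval (hT.one_le hc), rotval_rotval_one]

theorem psi_jdtFun_relabel (hk : k ∈ Set.Icc 1 n) (hT : IsFillingF n (boxShape lam) T)
    (hstd : IsStandardF (boxShape lam) T) (hTbox : T (boxCell lam) = n) :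
    psi n lam (jdtFun n (boxShape lam) (mapEntries (boxShape lam) (rotval n k) T)) =
      jdtFun n (boxShape lam) (mapEntries (boxShape lam) (rotval n (rotval n 1 k)) T) := by
  rw [psi, jdtInvFun_jdtFun_relabel hk hT hstd hTbox, relabel_one_relabel hT]

theorem psi_iterate_jdtFun_relabel (hk : k ∈ Set.Icc 1 n) (hT : IsFillingF n (boxShape lam) T)
    (hstd : IsStandardF (boxShape lam) T) (hTbox : T (boxCell lam) = n) (j : ℕ) :
    (psi n lam)^[j] (jdtFun n (boxShape lam) (mapEntries (boxShape lam) (rotval n k) T)) =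
      jdtFun n (boxShape lam) (mapEntries (boxShape lam) (rotval n (rotval n j k)) T) := by
  have hn : 0 < n := hk.1.trans hk.2
  induction j with
  | zero => rw [Function.iterate_zero_apply, rotval_of_add_le hk.1 hk.2, Nat.add_zero]
  | succ j ih =>
    rw [Function.iterate_succ_apply', ih, psi_jdtFun_relabel (rotval_mem hn j k) hT hstd hTbox,
      rotval_rotval hk.1]

theorem psi_iterate_self (hP : IsFillingF n (boxShape lam) P)
    (hstd : IsStandardF (boxShape lam) P) : (psi n lam)^[n] P = P := by
  obtain ⟨T, k, hk, hT, hTstd, hTbox, rfl⟩ := exists_eq_jdtFun_relabel hP hstd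
  rw [psi_iterate_jdtFun_relabel hk hT hTstd hTbox, rotval_self hk]

theorem psi_mem (hP : IsFillingF n (boxShape lam) P) (hstd : IsStandardF (boxShape lam) P) :
    IsFillingF n (boxShape lam) (psi n lam P) ∧ IsStandardF (boxShape lam) (psi n lam P) := by
  obtain ⟨T, k, hk, hT, hTstd, hTbox, rfl⟩ := exists_eq_jdtFun_relabel hP hstd
  have hn : 0 < n := hk.1.trans hk.2
  rw [psi_jdtFun_relabel hk hT hTstd hTbox]
  have hx := hT.relabel (rotval_bijOn hn (rotval_mem hn 1 k).2)
  exact ⟨isFillingF_jdtFun hx, isStandardF_jdtFun ordConnected_boxShape hx⟩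

theorem cDesBox_psi (hP : IsFillingF n (boxShape lam) P) (hstd : IsStandardF (boxShape lam) P) :
    cDesBox n lam (psi n lam P) = (cDesBox n lam P).image (rotval n 1) := by
  obtain ⟨T, k, hk, hT, hTstd, hTbox, rfl⟩ := exists_eq_jdtFun_relabel hP hstd
  have hn : 0 < n := hk.1.trans hk.2
  rw [psi_jdtFun_relabel hk hT hTstd hTbox, cDesBox, cDesBox,
    jdtInvFun_jdtFun_relabel (rotval_mem hn 1 k) hT hTstd hTbox,
    jdtInvFun_jdtFun_relabel hk hT hTstd hTbox, ← relabel_one_relabel hT,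
    cDesRot_relabel_one hn (hT.relabel (rotval_bijOn hn hk.2))]

end Psi

theorem psi_action_general (n : ℕ) (lam : YoungDiagram) :
    Set.BijOn
      (fun P => jdtFun n (boxShape lam)
        (mapEntries (boxShape lam) (rotval n 1) (jdtInvFun n lam P)))
      {P : ℕ × ℕ → ℕ | IsFillingF n (boxShape lam) P ∧ IsStandardF (boxShape lam) P}
      {P : ℕ × ℕ → ℕ | IsFillingF n (boxShape lam) P ∧ IsStandardF (boxShape lam) P} ∧
    (∀ P ∈ {P : ℕ × ℕ → ℕ |
        IsFillingF n (boxShape lam) P ∧ IsStandardF (boxShape lam) P},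
      (fun P => jdtFun n (boxShape lam)
        (mapEntries (boxShape lam) (rotval n 1) (jdtInvFun n lam P)))^[n] P = P) ∧
    (∀ P ∈ {P : ℕ × ℕ → ℕ |
        IsFillingF n (boxShape lam) P ∧ IsStandardF (boxShape lam) P},
      cDesBox n lam (jdtFun n (boxShape lam)
          (mapEntries (boxShape lam) (rotval n 1) (jdtInvFun n lam P))) =
        (cDesBox n lam P).image (rotval n 1)) := by
  have hper : ∀ P ∈ {P : ℕ × ℕ → ℕ |
      IsFillingF n (boxShape lam) P ∧ IsStandardF (boxShape lam) P}, (psi n lam)^[n] P = P :=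
    fun P hP => psi_iterate_self hP.1 hP.2
  refine ⟨Set.bijOn_of_iterate_eq_self (fun P hP => psi_mem hP.1 hP.2) hper ?_, hper,
    fun P hP => cDesBox_psi hP.1 hP.2⟩
  rintro ⟨P, hP, -⟩
  have := hP.one_le boxCell_mem_boxShape
  have := hP.le boxCell_mem_boxShape
  omega

/-- Proposition 5.2(2). For every `λ ⊢ n-1`, the map
`ψ(P) = jdt(1 + jdt⁻¹(P))` is a bijection of `SYT(λ^□)` onto itself whose `n`-th iterate
is the identity (so it generates a `ℤ_n`-action), and it rotates cyclic descent sets: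
`cDes(ψ(P)) = 1 + cDes(P)` (elementwise modulo `n`). -/
theorem psi_action (n : ℕ) (lam : YoungDiagram) (hlam : lam.cells.card = n - 1) :
    Set.BijOn
      (fun P => jdtFun n (boxShape lam)
        (mapEntries (boxShape lam) (rotval n 1) (jdtInvFun n lam P)))
      {P : ℕ × ℕ → ℕ | IsFillingF n (boxShape lam) P ∧ IsStandardF (boxShape lam) P}
      {P : ℕ × ℕ → ℕ | IsFillingF n (boxShape lam) P ∧ IsStandardF (boxShape lam) P} ∧
    (∀ P ∈ {P : ℕ × ℕ → ℕ |
        IsFillingF n (boxShape lam) P ∧ IsStandardF (boxShape lam) P},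
      (fun P => jdtFun n (boxShape lam)
        (mapEntries (boxShape lam) (rotval n 1) (jdtInvFun n lam P)))^[n] P = P) ∧
    (∀ P ∈ {P : ℕ × ℕ → ℕ |
        IsFillingF n (boxShape lam) P ∧ IsStandardF (boxShape lam) P},
      cDesBox n lam (jdtFun n (boxShape lam)
          (mapEntries (boxShape lam) (rotval n 1) (jdtInvFun n lam P))) =
        (cDesBox n lam P).image (rotval n 1)) :=
  psi_action_general n lam

end SchurRot
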